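/- arXiv:2107.03114 — 6 statements merged into one kernel-verified Lean document; each statement's English description precedes it below -/
import Mathlib

section
/- Let n ≥ 2, assume (n, p) ≠ (2, 2) and (n, |F|) ≠ (2, 3). Let R be an Artinian commutative local ring with maximal ideal m_R and residue field F, and let H be a subgroup of SL_n(R) whose image under the entrywise reduction SL_n(R) → SL_n(R/m_R²) is all of SL_n(R/m_R²). Then H = SL_n(R). -/
/-!
Write `m` for the maximal ideal and `Γ(I)` for the kernel of `SL_n(R) → SL_n(R/I)`. As `m` is
nilpotent, it suffices to lift `H Γ(m^k) = SL_n(R)` to `H Γ(m^(k+1)) = SL_n(R)` for `k ≥ 2`.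
Modulo `m^(k+1)`, `g ↦ g - 1` is additive on `Γ(m^k)`, and if `h, h' ∈ H` approximate
`1 + A, 1 + B ∈ SL_n(R)` modulo `m^k`, with `A ≡ 0 mod m` and `B ≡ 0 mod m^(k-1)`, then
`⁅h, h'⁆ ≡ 1 + AB - BA`. Such brackets give `x y E_ab` (`a ≠ b`) and `x y (E_aa - E_zz)` for
`x ∈ m`, `y ∈ m^(k-1)`: the off-diagonal ones through a third index if `n ≥ 3`, and by
conjugating with `diag(u, u⁻¹)` if `2` is a unit. Hence every `g ∈ Γ(m^k)` agrees modulo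
`m^(k+1)` with an element of `H` times `1 + c E_zz`, and comparing determinants gives
`c ∈ m^(k+1)`.
-/

open Matrix IsLocalRing

namespace Ideal

variable {n R : Type*} [Fintype n] [DecidableEq n] [CommRing R] {I J : Ideal R}
  {M N : Matrix n n R}

theorem mul_mem_matrix_mul (hM : M ∈ I.matrix n) (hN : N ∈ J.matrix n) :
    M * N ∈ (I * J).matrix n := fun a b =>
  Submodule.sum_mem _ fun k _ => mul_mem_mul (hM a k) (hN k b)

theorem mul_mem_matrix_right (hM : M ∈ I.matrix n) (N : Matrix n n R) :
    M * N ∈ I.matrix n := fun a _ =>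
  Submodule.sum_mem _ fun k _ => I.mul_mem_right _ (hM a k)

theorem mul_mem_matrix_pow {a b c : ℕ} (hc : c ≤ a + b) (hM : M ∈ (I ^ a).matrix n)
    (hN : N ∈ (I ^ b).matrix n) : M * N ∈ (I ^ c).matrix n :=
  matrix_monotone n (by rw [← pow_add]; exact pow_le_pow_right hc) (mul_mem_matrix_mul hM hN)

theorem single_mem_matrix {a b : n} {x : R} (hx : x ∈ I) : single a b x ∈ I.matrix n :=
  (Matrix.single_mem_matrix (S := (I : Set R)) I.zero_mem).mpr hx

theorem pow_succ_mul_pow_succ_le (q : Ideal R) (k : ℕ) :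
    q ^ (k + 1) * q ^ (k + 1) ≤ q ^ (k + 2) := by
  rw [← pow_add]
  exact pow_le_pow_right (by omega)

theorem det_sub_det_mem (h : M - N ∈ I.matrix n) : M.det - N.det ∈ I := by
  rw [← Quotient.eq, RingHom.map_det, RingHom.map_det]
  congr 1
  ext a b
  exact Quotient.eq.mpr (by simpa using h a b)

end Ideal

theorem IsLocalRing.isUnit_add_of_mem_maximalIdeal {R : Type*} [CommRing R] [IsLocalRing R]
    {a x : R} (ha : IsUnit a) (hx : x ∈ maximalIdeal R) : IsUnit (a + x) :=
  notMem_maximalIdeal.mp fun h => notMem_maximalIdeal.mpr ha (by simpa using sub_mem h hx)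

namespace Matrix

variable {n R : Type*} [Fintype n] [DecidableEq n] [CommRing R]

theorem det_one_add_single_same (z : n) (c : R) : det (1 + single z z c) = 1 + c := by
  rw [← diagonal_single, ← diagonal_one, diagonal_add, det_diagonal, Fintype.prod_eq_single z]
  · simp
  · intro t ht
    simp [ht]

theorem diagonal_mul_single_sub_single_mul_diagonal (D : n → R) (a b : n) (c : R) :
    diagonal D * single a b c - single a b c * diagonal D = single a b ((D a - D b) * c) := by
  ext s t
  simp only [Matrix.sub_apply, diagonal_mul, mul_diagonal, single_apply]
  split_ifs with h
  · obtain ⟨rfl, rfl⟩ := h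
    ring
  · ring

theorem diagonal_sub_one_mem_matrix {D : n → R} {I : Ideal R} (hD : ∀ t, D t - 1 ∈ I) :
    diagonal D - 1 ∈ I.matrix n := by
  intro s t
  by_cases hst : s = t
  · subst hst
    simpa using hD s
  · simp [hst]

theorem mul_sub_one_add_add_mem {I J : Ideal R} {g₁ g₂ B₁ B₂ : Matrix n n R}
    (hIJ : I * I ≤ J) (hB₁ : B₁ ∈ I.matrix n) (hB₂ : B₂ ∈ I.matrix n)
    (h₁ : g₁ - (1 + B₁) ∈ J.matrix n) (h₂ : g₂ - (1 + B₂) ∈ J.matrix n) :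
    g₁ * g₂ - (1 + (B₁ + B₂)) ∈ J.matrix n := by
  have : g₁ * g₂ - (1 + (B₁ + B₂)) =
      B₁ * B₂ + (g₁ - (1 + B₁)) * g₂ + (1 + B₁) * (g₂ - (1 + B₂)) := by noncomm_ring
  rw [this]
  exact add_mem (add_mem (Ideal.matrix_monotone n hIJ (Ideal.mul_mem_matrix_mul hB₁ hB₂))
    (Ideal.mul_mem_matrix_right h₁ g₂)) (Ideal.mul_mem_left _ _ h₂)

theorem sub_single_trace_mem {S : AddSubgroup (Matrix n n R)} {I : Ideal R} (z : n)
    (hoff : ∀ a b, a ≠ b → ∀ x ∈ I, single a b x ∈ S)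
    (hdiag : ∀ a, a ≠ z → ∀ x ∈ I, single a a x - single z z x ∈ S)
    {B : Matrix n n R} (hB : B ∈ I.matrix n) : B - single z z (trace B) ∈ S := by
  have : B - single z z (trace B) =
      ∑ a, ∑ b, (single a b (B a b) - if a = b then single z z (B a b) else 0) := by
    simp only [Finset.sum_sub_distrib, Finset.sum_ite_eq, Finset.mem_univ, if_true,
      ← matrix_eq_sum_single, trace, diag_apply]
    exact congrArg (B - ·) (map_sum (singleAddMonoidHom z z) _ _)
  rw [this]
  refine sum_mem fun a _ => sum_mem fun b _ => ?_
  by_cases hab : a = b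
  · subst hab
    by_cases haz : a = z
    · simp [haz]
    · simpa using hdiag a haz _ (hB a a)
  · simpa [hab] using hoff a b hab _ (hB a b)

end Matrix

namespace Matrix.SpecialLinearGroup

variable (n : Type*) {R : Type*} [Fintype n] [DecidableEq n] [CommRing R]

abbrev congruenceSubgroup (I : Ideal R) : Subgroup (SpecialLinearGroup n R) :=
  (map (Ideal.Quotient.mk I)).ker

variable {n} {I J : Ideal R} {H : Subgroup (SpecialLinearGroup n R)}

theorem mem_congruenceSubgroup {g : SpecialLinearGroup n R} :
    g ∈ congruenceSubgroup n I ↔ (g : Matrix n n R) - 1 ∈ I.matrix n := by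
  rw [MonoidHom.mem_ker, SpecialLinearGroup.ext_iff, Ideal.mem_matrix]
  simp only [map_apply_coe, RingHom.mapMatrix_apply, coe_one,
    ← Matrix.map_one (Ideal.Quotient.mk I) (map_zero _) (map_one _), Matrix.map_apply,
    Ideal.Quotient.eq, sub_apply]

theorem congruenceSubgroup_mono (h : I ≤ J) : congruenceSubgroup n I ≤ congruenceSubgroup n J :=
  fun _ hg => mem_congruenceSubgroup.mpr
    (Ideal.matrix_monotone n h (mem_congruenceSubgroup.mp hg))

theorem congruenceSubgroup_bot : congruenceSubgroup n (⊥ : Ideal R) = ⊥ := by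
  ext g
  rw [mem_congruenceSubgroup, Ideal.matrix_bot, Submodule.mem_bot, sub_eq_zero,
    Subgroup.mem_bot, SpecialLinearGroup.ext_iff]
  simp [Matrix.ext_iff]

theorem exists_sub_mem_matrix_of_sup_eq_top (hH : H ⊔ congruenceSubgroup n I = ⊤)
    (g : SpecialLinearGroup n R) : ∃ h ∈ H, (h : Matrix n n R) - g ∈ I.matrix n := by
  obtain ⟨h, hH, c, hc, rfl⟩ :=
    Subgroup.mem_sup_of_normal_right.mp (hH ▸ Subgroup.mem_top g)
  refine ⟨h, hH, ?_⟩
  have : (h : Matrix n n R) - ↑(h * c) = -(h * ((c : Matrix n n R) - 1)) := by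
    rw [coe_mul]; noncomm_ring
  rw [this]
  exact neg_mem (Ideal.mul_mem_left _ _ (mem_congruenceSubgroup.mp hc))

theorem inv_sub_one_sub_mem {g : SpecialLinearGroup n R} {B : Matrix n n R} (hIJ : I * I ≤ J)
    (hB : B ∈ I.matrix n) (hg : (g : Matrix n n R) - (1 + B) ∈ J.matrix n) :
    ((g⁻¹ : SpecialLinearGroup n R) : Matrix n n R) - (1 - B) ∈ J.matrix n := by
  have hinv : ((g⁻¹ : SpecialLinearGroup n R) : Matrix n n R) * g = 1 := by
    rw [← coe_mul, inv_mul_cancel, coe_one]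
  have : ((g⁻¹ : SpecialLinearGroup n R) : Matrix n n R) - (1 - B) =
      (g⁻¹ : SpecialLinearGroup n R) * (B * B - ((g : Matrix n n R) - (1 + B)) * (1 - B)) := by
    rw [show B * B - ((g : Matrix n n R) - (1 + B)) * (1 - B) = 1 - g * (1 - B) by noncomm_ring,
      mul_sub, mul_one, ← mul_assoc, hinv, one_mul]
  rw [this]
  exact Ideal.mul_mem_left _ _ (sub_mem (Ideal.matrix_monotone n hIJ
    (Ideal.mul_mem_matrix_mul hB hB)) (Ideal.mul_mem_matrix_right hg _))

/-- The preimage in `M_n(q^(k+1))` of the image of `H ∩ Γ(q^(k+1))` under the additive embedding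
`Γ(q^(k+1)) / Γ(q^(k+2)) → M_n(q^(k+1) / q^(k+2))`, `g ↦ g - 1`. -/
def tangentAddSubgroup (H : Subgroup (SpecialLinearGroup n R)) (q : Ideal R) (k : ℕ) :
    AddSubgroup (Matrix n n R) where
  carrier := {B | B ∈ (q ^ (k + 1)).matrix n ∧
    ∃ h ∈ H, (h : Matrix n n R) - (1 + B) ∈ (q ^ (k + 2)).matrix n}
  zero_mem' := ⟨zero_mem _, 1, H.one_mem, by simp⟩
  add_mem' := fun ⟨hB₁, h₁, h₁H, e₁⟩ ⟨hB₂, h₂, h₂H, e₂⟩ =>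
    ⟨add_mem hB₁ hB₂, h₁ * h₂, H.mul_mem h₁H h₂H,
      mul_sub_one_add_add_mem (Ideal.pow_succ_mul_pow_succ_le q k) hB₁ hB₂ e₁ e₂⟩
  neg_mem' := fun ⟨hB, h, hH, e⟩ =>
    ⟨neg_mem hB, h⁻¹, H.inv_mem hH, by
      simpa [sub_eq_add_neg] using inv_sub_one_sub_mem (Ideal.pow_succ_mul_pow_succ_le q k) hB e⟩

open scoped commutatorElement in
theorem commutatorElement_sub_one_sub_mem {P Q : Ideal R} {h h' : SpecialLinearGroup n R}
    (hh : h ∈ congruenceSubgroup n P) (hh' : h' ∈ congruenceSubgroup n Q) :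
    ((⁅h, h'⁆ : SpecialLinearGroup n R) : Matrix n n R) - 1 - (h * h' - h' * h) ∈
      (P * Q * (P ⊔ Q)).matrix n := by
  set w := (h' * h)⁻¹
  have hw : w ∈ congruenceSubgroup n (P ⊔ Q) :=
    inv_mem (mul_mem (congruenceSubgroup_mono le_sup_right hh')
      (congruenceSubgroup_mono le_sup_left hh))
  have hcomm : (⁅h, h'⁆ : SpecialLinearGroup n R) = h * h' * w := by
    rw [commutatorElement_def]; simp only [w]; group
  have hw' : (h' : Matrix n n R) * h * w = 1 := by
    rw [← coe_mul, ← coe_mul, mul_inv_cancel, coe_one]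
  have : ((⁅h, h'⁆ : SpecialLinearGroup n R) : Matrix n n R) - 1 - (h * h' - h' * h) =
      ((h - 1) * (h' - 1) - (h' - 1) * (h - 1)) * ((w : Matrix n n R) - 1) := by
    rw [show ((h : Matrix n n R) - 1) * (h' - 1) - (h' - 1) * (h - 1) = h * h' - h' * h by
      noncomm_ring, mul_sub, sub_mul, hw', hcomm, coe_mul, coe_mul, mul_one]
  rw [this]
  refine Ideal.mul_mem_matrix_mul (sub_mem ?_ ?_) (mem_congruenceSubgroup.mp hw)
  · exact Ideal.mul_mem_matrix_mul (mem_congruenceSubgroup.mp hh) (mem_congruenceSubgroup.mp hh')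
  · exact mul_comm P Q ▸ Ideal.mul_mem_matrix_mul (mem_congruenceSubgroup.mp hh')
      (mem_congruenceSubgroup.mp hh)

theorem mem_sup_congruenceSubgroup_of_mem_tangentAddSubgroup {q : Ideal R} {i : ℕ} (z : n)
    {k : SpecialLinearGroup n R} (hk : k ∈ congruenceSubgroup n (q ^ (i + 1)))
    (hT : (k : Matrix n n R) - 1 - single z z (trace ((k : Matrix n n R) - 1)) ∈
      tangentAddSubgroup H q i) :
    k ∈ H ⊔ congruenceSubgroup n (q ^ (i + 2)) := by
  have hIJ := Ideal.pow_succ_mul_pow_succ_le q i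
  set B := (k : Matrix n n R) - 1
  set c := trace B
  obtain ⟨hB', h, hH, e⟩ := hT
  have hinv := inv_sub_one_sub_mem hIJ hB' e
  rw [sub_eq_add_neg 1] at hinv
  have hk' : (k : Matrix n n R) - (1 + B) ∈ (q ^ (i + 2)).matrix n := by simp [B]
  have e' := mul_sub_one_add_add_mem hIJ (neg_mem hB') (mem_congruenceSubgroup.mp hk) hinv hk'
  rw [neg_sub, sub_add_cancel, ← coe_mul] at e'
  -- taking determinants in `h⁻¹ k ≡ 1 + c E_zz` gives `1 ≡ 1 + c`
  have hc : c ∈ q ^ (i + 2) := by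
    have := Ideal.det_sub_det_mem e'
    rwa [det_coe, det_one_add_single_same, sub_add_cancel_left, neg_mem_iff] at this
  have hJ : h⁻¹ * k ∈ congruenceSubgroup n (q ^ (i + 2)) := by
    rw [mem_congruenceSubgroup, ← sub_add_cancel (_ - 1) (single z z c), sub_sub]
    exact add_mem e' (Ideal.single_mem_matrix hc)
  simpa using Subgroup.mul_mem_sup hH hJ

open scoped commutatorElement in
theorem mul_sub_mul_mem_tangentAddSubgroup {q : Ideal R} {i : ℕ}
    (hH : H ⊔ congruenceSubgroup n (q ^ (i + 2)) = ⊤) {A B : Matrix n n R}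
    (hA : A ∈ q.matrix n) (hB : B ∈ (q ^ (i + 1)).matrix n)
    (hdetA : det (1 + A) = 1) (hdetB : det (1 + B) = 1) :
    A * B - B * A ∈ tangentAddSubgroup H q (i + 1) := by
  rw [← pow_one q] at hA
  obtain ⟨h, hhH, hh⟩ := exists_sub_mem_matrix_of_sup_eq_top hH ⟨1 + A, hdetA⟩
  obtain ⟨h', hh'H, hh'⟩ := exists_sub_mem_matrix_of_sup_eq_top hH ⟨1 + B, hdetB⟩
  change (h : Matrix n n R) - (1 + A) ∈ _ at hh
  change (h' : Matrix n n R) - (1 + B) ∈ _ at hh'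
  have hX : h ∈ congruenceSubgroup n (q ^ 1) := by
    rw [mem_congruenceSubgroup, ← sub_add_cancel ((h : Matrix n n R) - 1) A, sub_sub]
    exact add_mem (Ideal.matrix_monotone n (Ideal.pow_le_pow_right (by omega : 1 ≤ i + 2)) hh)
      hA
  have hY : h' ∈ congruenceSubgroup n (q ^ (i + 1)) := by
    rw [mem_congruenceSubgroup, ← sub_add_cancel ((h' : Matrix n n R) - 1) B, sub_sub]
    exact add_mem
      (Ideal.matrix_monotone n (Ideal.pow_le_pow_right (by omega : i + 1 ≤ i + 2)) hh') hB
  have hle : q ^ 1 * q ^ (i + 1) * (q ^ 1 ⊔ q ^ (i + 1)) ≤ q ^ (i + 3) := by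
    rw [sup_eq_left.mpr (Ideal.pow_le_pow_right (by omega)), ← pow_add, ← pow_add]
    exact Ideal.pow_le_pow_right (by omega)
  have hcomm := Ideal.matrix_monotone n hle (commutatorElement_sub_one_sub_mem hX hY)
  have hlie : (h * h' - h' * h : Matrix n n R) - (A * B - B * A) =
      (h - (1 + A)) * (h' - 1) + A * (h' - (1 + B)) - (h' - (1 + B)) * (h - 1)
        - B * (h - (1 + A)) := by noncomm_ring
  have hY' := mem_congruenceSubgroup.mp hY
  have hX' := mem_congruenceSubgroup.mp hX
  refine ⟨sub_mem (Ideal.mul_mem_matrix_pow (by omega) hA hB)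
    (Ideal.mul_mem_matrix_pow (by omega) hB hA), ⁅h, h'⁆, ?_, ?_⟩
  · rw [commutatorElement_def]
    exact mul_mem (mul_mem (mul_mem hhH hh'H) (inv_mem hhH)) (inv_mem hh'H)
  · rw [show ((⁅h, h'⁆ : SpecialLinearGroup n R) : Matrix n n R) - (1 + (A * B - B * A)) =
        (↑⁅h, h'⁆ - 1 - (h * h' - h' * h)) + ((h * h' - h' * h) - (A * B - B * A)) by abel,
      hlie]
    refine add_mem hcomm (sub_mem (sub_mem (add_mem ?_ ?_) ?_) ?_)
    · exact Ideal.mul_mem_matrix_pow (by omega) hh hY'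
    · exact Ideal.mul_mem_matrix_pow (by omega) hA hh'
    · exact Ideal.mul_mem_matrix_pow (by omega) hh' hX'
    · exact Ideal.mul_mem_matrix_pow (by omega) hB hh

section Generators

variable {q : Ideal R} {i : ℕ} {x y : R}

theorem single_sub_single_mem_tangentAddSubgroup
    (hH : H ⊔ congruenceSubgroup n (q ^ (i + 2)) = ⊤) (hx : x ∈ q) (hy : y ∈ q ^ (i + 1))
    {a z : n} (haz : a ≠ z) :
    single a a (x * y) - single z z (x * y) ∈ tangentAddSubgroup H q (i + 1) := by
  have := mul_sub_mul_mem_tangentAddSubgroup hH (Ideal.single_mem_matrix hx (a := a) (b := z))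
    (Ideal.single_mem_matrix hy (a := z) (b := a)) (det_transvection_of_ne a z haz x)
    (det_transvection_of_ne z a haz.symm y)
  rwa [single_mul_single_same, single_mul_single_same, mul_comm y] at this

theorem single_mem_tangentAddSubgroup_of_three_le
    (hH : H ⊔ congruenceSubgroup n (q ^ (i + 2)) = ⊤) (hx : x ∈ q) (hy : y ∈ q ^ (i + 1))
    (hn : 3 ≤ Fintype.card n) {a b : n} (hab : a ≠ b) :
    single a b (x * y) ∈ tangentAddSubgroup H q (i + 1) := by
  obtain ⟨c, -, hc⟩ := Finset.exists_mem_notMem_of_card_lt_card (s := {a, b})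
    (t := Finset.univ) (Finset.card_le_two.trans_lt (by rw [Finset.card_univ]; omega))
  simp only [Finset.mem_insert, Finset.mem_singleton, not_or] at hc
  have := mul_sub_mul_mem_tangentAddSubgroup hH (Ideal.single_mem_matrix hx (a := a) (b := c))
    (Ideal.single_mem_matrix hy (a := c) (b := b)) (det_transvection_of_ne a c (Ne.symm hc.1) x)
    (det_transvection_of_ne c b hc.2 y)
  rwa [single_mul_single_same, single_mul_single_of_ne (h := hab.symm), sub_zero] at this

end Generators

section LocalRing

variable [IsLocalRing R]

theorem single_mem_tangentAddSubgroup_of_isUnit_two {i : ℕ}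
    (hH : H ⊔ congruenceSubgroup n (maximalIdeal R ^ (i + 2)) = ⊤) (h2 : IsUnit (2 : R))
    {x y : R} (hx : x ∈ maximalIdeal R) (hy : y ∈ maximalIdeal R ^ (i + 1)) {a b : n}
    (hab : a ≠ b) : single a b (x * y) ∈ tangentAddSubgroup H (maximalIdeal R) (i + 1) := by
  obtain ⟨u, hu⟩ := isUnit_add_of_mem_maximalIdeal isUnit_one hx
  obtain ⟨v, hv⟩ := isUnit_add_of_mem_maximalIdeal h2 hx
  -- Commuting `c E_ab` with `diag(u, u⁻¹)`, `u = 1 + x`, multiplies it by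
  -- `u - u⁻¹ = x (2 + x) u⁻¹`; as `2 + x` is a unit, `c` can be chosen so that this is `x y`.
  set D : n → R := Pi.mulSingle a (u : R) * Pi.mulSingle b ((u⁻¹ : Rˣ) : R)
  have hDa : D a = u := by simp [D, Pi.mulSingle_eq_of_ne hab]
  have hDb : D b = ((u⁻¹ : Rˣ) : R) := by simp [D, Pi.mulSingle_eq_of_ne hab.symm]
  have hdet : det (1 + (diagonal D - 1)) = 1 := by
    simp [D, det_diagonal, Finset.prod_mul_distrib]
  have hD : diagonal D - 1 ∈ (maximalIdeal R).matrix n := diagonal_sub_one_mem_matrix fun t => by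
    by_cases hta : t = a
    · rwa [hta, hDa, hu, add_sub_cancel_left]
    by_cases htb : t = b
    · rw [htb, hDb, show ((u⁻¹ : Rˣ) : R) - 1 = -(↑u⁻¹ * x) by
        linear_combination u.inv_mul - ↑u⁻¹ * hu]
      exact neg_mem (Ideal.mul_mem_left _ _ hx)
    simp [D, hta, htb]
  set c := (u : R) * ↑v⁻¹ * y
  have := mul_sub_mul_mem_tangentAddSubgroup hH hD
    (Ideal.single_mem_matrix (Ideal.mul_mem_left _ _ hy) (a := a) (b := b) (x := c)) hdet
    (det_transvection_of_ne a b hab c)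
  rwa [sub_one_mul, mul_sub_one, sub_sub_sub_cancel_right,
    diagonal_mul_single_sub_single_mul_diagonal, hDa, hDb,
    show ((u : R) - ↑u⁻¹) * c = x * y by
      linear_combination (-(↑v⁻¹ * y)) * u.mul_inv + (↑v⁻¹ * y * (↑u + 1 + x)) * hu
        - (↑v⁻¹ * y * x) * hv + (x * y) * v.mul_inv] at this

theorem sup_congruenceSubgroup_pow_succ_eq_top [Nonempty n]
    (hn : IsUnit (2 : R) ∨ 3 ≤ Fintype.card n) {i : ℕ}
    (hH : H ⊔ congruenceSubgroup n (maximalIdeal R ^ (i + 2)) = ⊤) :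
    H ⊔ congruenceSubgroup n (maximalIdeal R ^ (i + 3)) = ⊤ := by
  obtain ⟨z⟩ := ‹Nonempty n›
  have hoff : ∀ a b : n, a ≠ b → ∀ ξ ∈ maximalIdeal R ^ (i + 2),
      single a b ξ ∈ tangentAddSubgroup H (maximalIdeal R) (i + 1) := by
    intro a b hab ξ hξ
    rw [pow_succ'] at hξ
    refine Submodule.mul_induction_on hξ (fun x hx y hy => ?_) fun u v hu hv => ?_
    · rcases hn with h2 | h3
      · exact single_mem_tangentAddSubgroup_of_isUnit_two hH h2 hx hy hab
      · exact single_mem_tangentAddSubgroup_of_three_le hH hx hy h3 hab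
    · rw [single_add]
      exact add_mem hu hv
  have hdiag : ∀ a : n, a ≠ z → ∀ ξ ∈ maximalIdeal R ^ (i + 2),
      single a a ξ - single z z ξ ∈ tangentAddSubgroup H (maximalIdeal R) (i + 1) := by
    intro a haz ξ hξ
    rw [pow_succ'] at hξ
    refine Submodule.mul_induction_on hξ
      (fun x hx y hy => single_sub_single_mem_tangentAddSubgroup hH hx hy haz)
      fun u v hu hv => ?_
    rw [single_add, single_add, add_sub_add_comm]
    exact add_mem hu hv
  rw [eq_top_iff, ← hH]
  exact sup_le le_sup_left fun k hk =>
    mem_sup_congruenceSubgroup_of_mem_tangentAddSubgroup z hk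
      (sub_single_trace_mem z hoff hdiag (mem_congruenceSubgroup.mp hk))

end LocalRing

end Matrix.SpecialLinearGroup

theorem statement_4_general
    (p : ℕ) (F : Type*) [Field F] [CharP F p]
    (n : ℕ) (hn : 2 ≤ n)
    (h22 : ¬(n = 2 ∧ p = 2))
    (R : Type*) [CommRing R] [IsLocalRing R] [IsArtinianRing R]
    (π : R →+* F)
    (hker : RingHom.ker π = maximalIdeal R)
    (H : Subgroup (SpecialLinearGroup (Fin n) R))
    (Hfull : Subgroup.map
      (SpecialLinearGroup.map (Ideal.Quotient.mk (maximalIdeal R ^ 2))) H = ⊤) :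
    H = ⊤ := by
  have : Nonempty (Fin n) := ⟨⟨0, by omega⟩⟩
  have h2 : IsUnit (2 : R) ∨ 3 ≤ Fintype.card (Fin n) := by
    by_cases hp : p = 2
    · exact Or.inr (by rw [Fintype.card_fin]; omega)
    · refine Or.inl (notMem_maximalIdeal.mp ?_)
      rw [← hker, RingHom.mem_ker, map_ofNat]
      exact Ring.two_ne_zero (by rwa [ringChar.eq F p])
  have hlevel : ∀ i,
      H ⊔ SpecialLinearGroup.congruenceSubgroup (Fin n) (maximalIdeal R ^ (i + 2)) = ⊤ := by
    intro i
    induction i with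
    | zero => rw [← Subgroup.comap_map_eq, Hfull, Subgroup.comap_top]
    | succ i ih => exact SpecialLinearGroup.sup_congruenceSubgroup_pow_succ_eq_top h2 ih
  obtain ⟨N, hN⟩ := IsArtinianRing.isNilpotent_jacobson_bot (R := R)
  rw [jacobson_eq_maximalIdeal ⊥ bot_ne_top, Ideal.zero_eq_bot] at hN
  have hbot : maximalIdeal R ^ (N + 2) = ⊥ :=
    le_bot_iff.mp (hN ▸ Ideal.pow_le_pow_right (by omega))
  simpa [hbot, SpecialLinearGroup.congruenceSubgroup_bot] using hlevel N

/-- For `n ≥ 2`, `(n,p) ≠ (2,2)` and `(n,|F|) ≠ (2,3)`, a subgroup of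
`SL_n(R)` (`R` Artinian local with residue field `F`) surjecting onto `SL_n(R/m_R²)` is all of
`SL_n(R)`. -/
theorem statement_4
    (p : ℕ) [Fact p.Prime] (F : Type*) [Field F] [Fintype F] [CharP F p]
    (n : ℕ) (hn : 2 ≤ n)
    (h22 : ¬(n = 2 ∧ p = 2)) (h23 : ¬(n = 2 ∧ Fintype.card F = 3))
    (R : Type*) [CommRing R] [IsLocalRing R] [IsArtinianRing R]
    (π : R →+* F) (hπ : Function.Surjective π)
    (hker : RingHom.ker π = maximalIdeal R)
    (H : Subgroup (SpecialLinearGroup (Fin n) R))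
    (Hfull : Subgroup.map
      (SpecialLinearGroup.map (Ideal.Quotient.mk (maximalIdeal R ^ 2))) H = ⊤) :
    H = ⊤ :=
  statement_4_general p F n hn h22 R π hker H Hfull
end

section
/- Let n ≥ 2 and assume (n, |F|) ∉ {(2,2), (2,3)}. Let R and A be Artinian commutative local rings with residue field F, and let ρ : SL_n(R) → GL_n(A) be a group homomorphism whose composite with the entrywise reduction GL_n(A) → GL_n(F) equals the composite of the entrywise reduction SL_n(R) → SL_n(F) with the inclusion SL_n(F) ⊆ GL_n(F). Then det(ρ(M)) = 1 for every M ∈ SL_n(R); that is, the image of ρ is contained in SL_n(A). -/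
/-!
`M ↦ det (ρ M)` is a homomorphism into the abelian group `Aˣ`, so it kills commutators and it
suffices that `SL_n(R)` is perfect. Over a local ring, Gaussian elimination, column by column and
with row operations only, writes every element of `SL_n(R)` as a product of elementary
transvections `e_ij(c)`. Each of these is a commutator: `e_ij(c) = ⁅e_ik(c), e_kj(1)⁆` when there is
a third index `k`, and `⁅diag(u, u⁻¹), e_ij(c)⁆ = e_ij((u² - 1) c)` when `u² - 1` is a unit, which
can be arranged by lifting an `a ∈ F` with `a ≠ 0, a² ≠ 1`, i.e. as soon as `|F| > 3`.
-/

open Matrix IsLocalRing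
open scoped commutatorElement

lemma IsLocalRing.isUnit_add_of_not_isUnit {R : Type*} [CommRing R] [IsLocalRing R] {x y : R}
    (hx : ¬IsUnit x) (hy : IsUnit y) : IsUnit (x + y) := by
  by_contra h
  apply nonunits_add h (show -x ∈ nonunits R by simpa using hx)
  simpa using hy

namespace Matrix

variable {ι R : Type*} [Fintype ι] [DecidableEq ι] [CommRing R] {n : ℕ}

lemma diagonal_mul_single (d : ι → R) (i j : ι) (c : R) :
    diagonal d * single i j c = single i j (d i * c) := by
  ext a b
  by_cases h : i = a <;> simp [diagonal_mul, single_apply, h]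

lemma single_mul_diagonal (d : ι → R) (i j : ι) (c : R) :
    single i j c * diagonal d = single i j (c * d j) := by
  ext a b
  by_cases h : j = b <;> simp [mul_diagonal, single_apply, h]

lemma exists_isUnit_apply_of_isUnit_det [IsLocalRing R] {M : Matrix ι ι R} (hM : IsUnit M.det)
    (j : ι) : ∃ i, IsUnit (M i j) := by
  by_contra! h
  apply (residue_ne_zero_iff_isUnit _).mpr hM
  rw [RingHom.map_det, RingHom.mapMatrix_apply]
  exact det_eq_zero_of_column_eq_zero j fun i ↦ (residue_eq_zero_iff _).mpr (h i)

def LeftColsEqOne (r : ℕ) (M : Matrix (Fin n) (Fin n) R) : Prop :=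
  ∀ i j : Fin n, j.val < r → M i j = (1 : Matrix (Fin n) (Fin n) R) i j

namespace LeftColsEqOne

variable {r : ℕ} {M : Matrix (Fin n) (Fin n) R}

lemma transvection_mul {i j : Fin n} (hj : r ≤ j.val) (c : R) (hM : LeftColsEqOne r M) :
    LeftColsEqOne r (transvection i j c * M) := by
  intro a b hb
  by_cases ha : a = i
  · have hjb : j ≠ b := Fin.ne_of_val_ne (by omega)
    subst ha
    rw [transvection_mul_apply_same, hM a b hb, hM j b hb, one_apply_ne hjb, mul_zero, add_zero]
  · rw [transvection_mul_apply_of_ne _ _ _ _ ha, hM a b hb]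

lemma eq_one (hM : LeftColsEqOne n M) : M = 1 :=
  Matrix.ext fun i j ↦ hM i j j.isLt

lemma det_eq {i : Fin n} (hi : i.val + 1 = n) (hM : LeftColsEqOne i.val M) : M.det = M i i := by
  rw [det_of_isUpperTriangular]
  · refine Finset.prod_eq_single i (fun k _ hki ↦ ?_) (by simp)
    rw [hM k k (by omega), one_apply_eq]
  · intro a b (hba : b < a)
    rw [hM a b (by omega), one_apply_ne hba.ne']

lemma mulVec_eq_self (hM : LeftColsEqOne r M) {w : Fin n → R}
    (hw : ∀ k : Fin n, r ≤ k.val → w k = 0) : M *ᵥ w = w := by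
  refine (?_ : M *ᵥ w = (1 : Matrix (Fin n) (Fin n) R) *ᵥ w).trans (one_mulVec w)
  ext i
  simp only [mulVec, dotProduct]
  refine Finset.sum_congr rfl fun k _ ↦ ?_
  by_cases hk : k.val < r
  · rw [hM i k hk]
  · rw [hw k (by omega), mul_zero, mul_zero]

lemma exists_isUnit_apply [IsLocalRing R] (hM : LeftColsEqOne r M) (hdet : IsUnit M.det)
    {j : Fin n} (hj : r ≤ j.val) : ∃ i : Fin n, r ≤ i.val ∧ IsUnit (M i j) := by
  by_contra! h
  -- Subtracting `∑_{k < r} M k j • eₖ` from column `j` keeps the determinant and leaves a column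
  -- of nonunits.
  set w : Fin n → R := fun k ↦ if k.val < r then M k j else 0
  have hMv : M *ᵥ (Pi.single j 1 - w) = fun k ↦ if k.val < r then 0 else M k j := by
    rw [mulVec_sub, hM.mulVec_eq_self fun k hk ↦ if_neg (by omega), mulVec_single_one]
    ext k
    by_cases hk : k.val < r <;> simp [hk]
  have hdet' := det_updateCol_sum M j (Pi.single j 1 - w)
  have hsum : (fun k ↦ ∑ i, (Pi.single j 1 - w : Fin n → R) i • M k i) =
      M *ᵥ (Pi.single j 1 - w) := by
    ext k; simp only [mulVec, dotProduct, smul_eq_mul, mul_comm]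
  rw [hsum, hMv] at hdet'
  simp only [Pi.sub_apply, Pi.single_eq_same, w, if_neg (show ¬ j.val < r by omega), sub_zero,
    one_smul] at hdet'
  obtain ⟨i, hi⟩ := exists_isUnit_apply_of_isUnit_det (hdet' ▸ hdet) j
  rw [updateCol_self] at hi
  split_ifs at hi with hir
  · exact not_isUnit_zero hi
  · exact h i (by omega) hi

end LeftColsEqOne

namespace SpecialLinearGroup

lemma coe_transvection_mul {i j : ι} (hij : i ≠ j) (c : R) (M : SpecialLinearGroup ι R) :
    ((transvection hij c * M : SpecialLinearGroup ι R) : Matrix ι ι R) =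
      Matrix.transvection i j c * M := rfl

def elementarySubgroup (ι R : Type*) [Fintype ι] [DecidableEq ι] [CommRing R] :
    Subgroup (SpecialLinearGroup ι R) :=
  Subgroup.closure {g | ∃ (i j : ι) (hij : i ≠ j) (c : R), transvection hij c = g}

lemma transvection_mem_elementarySubgroup {i j : ι} (hij : i ≠ j) (c : R) :
    transvection hij c ∈ elementarySubgroup ι R :=
  Subgroup.subset_closure ⟨i, j, hij, c, rfl⟩

lemma mem_elementarySubgroup_of_transvection_mul {i j : ι} (hij : i ≠ j) (c : R)
    {M : SpecialLinearGroup ι R} (h : transvection hij c * M ∈ elementarySubgroup ι R) :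
    M ∈ elementarySubgroup ι R :=
  (Subgroup.mul_mem_cancel_left _ (transvection_mem_elementarySubgroup hij c)).mp h

lemma transvection_eq_commutatorElement {i j k : ι} (hij : i ≠ j) (hik : i ≠ k) (hkj : k ≠ j)
    (c : R) : transvection hij c = ⁅transvection hik c, transvection hkj 1⁆ := by
  rw [commutatorElement_def, transvection_inv, transvection_inv]
  refine Subtype.ext ?_
  simp only [coe_mul, transvection_coe, add_mul, mul_add, one_mul, mul_one,
    single_mul_single_same, single_mul_single_of_ne _ _ _ _ hik.symm,
    single_mul_single_of_ne _ _ _ _ hkj.symm, single_mul_single_of_ne _ _ _ _ hij.symm,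
    add_zero]
  simp only [mul_neg, mul_one, neg_neg, ← single_neg]
  abel

def diagUnit {i j : ι} (hij : i ≠ j) (u : Rˣ) : SpecialLinearGroup ι R :=
  ⟨diagonal (Function.update (Function.update 1 j ↑u⁻¹) i ↑u), by
    rw [det_diagonal, Finset.prod_update_of_mem (Finset.mem_univ i),
      Finset.prod_update_of_mem (by simp [hij.symm] : j ∈ Finset.univ \ {i})]
    simp⟩

lemma coe_diagUnit {i j : ι} (hij : i ≠ j) (u : Rˣ) :
    (diagUnit hij u : Matrix ι ι R) = diagonal (Function.update (Function.update 1 j ↑u⁻¹) i ↑u) :=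
  rfl

lemma diagUnit_mul_transvection_mul_inv {i j : ι} (hij : i ≠ j) (u : Rˣ) (c : R) :
    diagUnit hij u * transvection hij c * (diagUnit hij u)⁻¹ = transvection hij (u ^ 2 * c) := by
  rw [mul_inv_eq_iff_eq_mul]
  refine Subtype.ext ?_
  simp only [coe_mul, coe_diagUnit, transvection_coe, add_mul, mul_add, one_mul, mul_one,
    diagonal_mul_single, single_mul_diagonal, Function.update_self,
    Function.update_of_ne hij.symm]
  congr 2
  rw [mul_right_comm, pow_two, Units.mul_inv_cancel_right]

lemma commutatorElement_diagUnit_transvection {i j : ι} (hij : i ≠ j) (u : Rˣ) (c : R) :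
    ⁅diagUnit hij u, transvection hij c⁆ = transvection hij ((u ^ 2 - 1 : R) * c) := by
  rw [commutatorElement_def, diagUnit_mul_transvection_mul_inv, transvection_inv,
    ← transvection_add]
  ring_nf

lemma mem_elementarySubgroup_of_apply_self_eq_one {r : Fin n}
    (ih : ∀ N : SpecialLinearGroup (Fin n) R,
      LeftColsEqOne (r.val + 1) N.1 → N ∈ elementarySubgroup (Fin n) R)
    {M : SpecialLinearGroup (Fin n) R} (hM : LeftColsEqOne r.val M.1)
    (hpivot : M r r = 1) : M ∈ elementarySubgroup (Fin n) R := by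
  -- `s` is the set of rows whose entry in column `r` is still to be cleared against the pivot.
  suffices h : ∀ s : Finset (Fin n), r ∉ s → ∀ M : SpecialLinearGroup (Fin n) R,
      LeftColsEqOne r.val M.1 → (∀ a ∉ s, M a r = (1 : Matrix (Fin n) (Fin n) R) a r) →
      M ∈ elementarySubgroup (Fin n) R by
    refine h (Finset.univ.erase r) (Finset.notMem_erase r _) M hM fun a ha ↦ ?_
    obtain rfl : a = r := by simpa using ha
    rw [hpivot, one_apply_eq]
  intro s
  induction s using Finset.induction_on with
  | empty =>
    intro _ M hM hcol
    refine ih M fun a b hb ↦ ?_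
    rcases (Nat.lt_succ_iff_lt_or_eq.mp hb) with hb | hb
    · exact hM a b hb
    · rw [Fin.ext hb]; exact hcol a (Finset.notMem_empty a)
  | insert a s has ihs =>
    intro hrs M hM hcol
    have har : a ≠ r := fun h ↦ hrs (h ▸ Finset.mem_insert_self a s)
    apply mem_elementarySubgroup_of_transvection_mul har (-M a r)
    refine ihs (fun h ↦ hrs (Finset.mem_insert_of_mem h)) _ (hM.transvection_mul le_rfl _)
      fun b hb ↦ ?_
    rw [coe_transvection_mul]
    by_cases hba : b = a
    · subst hba
      rw [transvection_mul_apply_same, hcol r hrs, one_apply_eq, one_apply_ne har]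
      ring
    · rw [transvection_mul_apply_of_ne _ _ _ _ hba, hcol b (by simp [hba, hb])]

lemma mem_elementarySubgroup_of_leftColsEqOne [IsLocalRing R] {r : Fin n}
    (ih : ∀ N : SpecialLinearGroup (Fin n) R,
      LeftColsEqOne (r.val + 1) N.1 → N ∈ elementarySubgroup (Fin n) R)
    {M : SpecialLinearGroup (Fin n) R} (hM : LeftColsEqOne r.val M.1) :
    M ∈ elementarySubgroup (Fin n) R := by
  by_cases hlast : r.val + 1 = n
  · exact mem_elementarySubgroup_of_apply_self_eq_one ih hM (by rw [← hM.det_eq hlast, M.det_coe])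
  -- Otherwise row `j = r + 1` exists; a unit moved to `(j, r)` turns the pivot into `1`.
  set j : Fin n := ⟨r.val + 1, by omega⟩
  have hrj : r ≠ j := Fin.ne_of_val_ne (by simp [j])
  suffices hunit : ∀ N : SpecialLinearGroup (Fin n) R,
      LeftColsEqOne r.val N.1 → IsUnit (N j r) → N ∈ elementarySubgroup (Fin n) R by
    by_cases hMj : IsUnit (M j r)
    · exact hunit M hM hMj
    obtain ⟨i, hri, hi⟩ := hM.exists_isUnit_apply (by rw [M.det_coe]; exact isUnit_one) le_rfl
    have hji : j ≠ i := by rintro rfl; exact hMj hi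
    apply mem_elementarySubgroup_of_transvection_mul hji 1
    refine hunit _ (hM.transvection_mul hri 1) ?_
    rw [coe_transvection_mul, transvection_mul_apply_same, one_mul]
    exact isUnit_add_of_not_isUnit hMj hi
  rintro N hN ⟨u, hu⟩
  apply mem_elementarySubgroup_of_transvection_mul hrj ((1 - N r r) * ↑u⁻¹)
  refine mem_elementarySubgroup_of_apply_self_eq_one ih (hN.transvection_mul (by simp [j]) _) ?_
  rw [coe_transvection_mul, transvection_mul_apply_same, ← hu, mul_assoc, Units.inv_mul, mul_one]
  ring

theorem elementarySubgroup_eq_top [IsLocalRing R] :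
    elementarySubgroup (Fin n) R = ⊤ := by
  suffices h : ∀ k r, r + k = n → ∀ M : SpecialLinearGroup (Fin n) R,
      LeftColsEqOne r M.1 → M ∈ elementarySubgroup (Fin n) R from
    Subgroup.eq_top_iff' _ |>.mpr fun M ↦ h n 0 (zero_add n) M fun _ _ h ↦ absurd h (by omega)
  intro k
  induction k with
  | zero =>
    intro r hr M hM
    obtain rfl : r = n := hr
    obtain rfl : M = 1 := Subtype.ext hM.eq_one
    exact one_mem _
  | succ k ih =>
    intro r hr M hM
    exact mem_elementarySubgroup_of_leftColsEqOne (r := ⟨r, by omega⟩) (ih (r + 1) (by omega)) hM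

theorem commutator_eq_top_of_isLocalRing [IsLocalRing R]
    (h : 3 ≤ n ∨ ∃ u : Rˣ, IsUnit ((u : R) ^ 2 - 1)) :
    commutator (SpecialLinearGroup (Fin n) R) = ⊤ := by
  rw [eq_top_iff, ← elementarySubgroup_eq_top, elementarySubgroup, Subgroup.closure_le,
    commutator_def]
  rintro _ ⟨i, j, hij, c, rfl⟩
  rcases h with h3 | ⟨u, v, hv⟩
  · obtain ⟨k, hki, hkj⟩ := Fin.exists_ne_and_ne_of_two_lt i j h3
    rw [transvection_eq_commutatorElement hij hki.symm hkj c]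
    exact Subgroup.commutator_mem_commutator (Subgroup.mem_top _) (Subgroup.mem_top _)
  · rw [show c = (u ^ 2 - 1 : R) * (↑v⁻¹ * c) by rw [← hv, ← mul_assoc, Units.mul_inv, one_mul],
      ← commutatorElement_diagUnit_transvection]
    exact Subgroup.commutator_mem_commutator (Subgroup.mem_top _) (Subgroup.mem_top _)

end SpecialLinearGroup
end Matrix

lemma FiniteField.exists_ne_zero_sq_ne_one {F : Type*} [Field F] [Fintype F]
    (hF : 3 < Fintype.card F) : ∃ a : F, a ≠ 0 ∧ a ^ 2 ≠ 1 := by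
  classical
  by_contra! h
  have hsub : (Finset.univ : Finset F) ⊆ {0, 1, -1} := fun x _ ↦ by
    by_cases hx : x = 0
    · simp [hx]
    · simpa [hx] using sq_eq_one_iff.mp (h x hx)
  have := (Finset.card_le_card hsub).trans Finset.card_le_three
  rw [Finset.card_univ] at this
  omega

lemma IsLocalRing.exists_units_isUnit_sq_sub_one {R F : Type*} [CommRing R] [IsLocalRing R]
    [Field F] [Fintype F] {π : R →+* F} (hπ : Function.Surjective π)
    (hker : RingHom.ker π = maximalIdeal R) (hF : 3 < Fintype.card F) :
    ∃ u : Rˣ, IsUnit ((u : R) ^ 2 - 1) := by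
  have isUnit_of_map_ne_zero {x : R} (hx : π x ≠ 0) : IsUnit x :=
    of_not_not fun h ↦ hx (by rwa [← RingHom.mem_ker, hker, mem_maximalIdeal])
  obtain ⟨a, ha0, ha⟩ := FiniteField.exists_ne_zero_sq_ne_one hF
  obtain ⟨x, rfl⟩ := hπ a
  obtain ⟨u, rfl⟩ := isUnit_of_map_ne_zero ha0
  exact ⟨u, isUnit_of_map_ne_zero (by simpa [sub_eq_zero] using ha)⟩

theorem statement_8_general
    (F : Type*) [Field F] [Fintype F]
    (n : ℕ) (hn : 2 ≤ n)
    (h22 : ¬(n = 2 ∧ Fintype.card F = 2)) (h23 : ¬(n = 2 ∧ Fintype.card F = 3))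
    (R : Type*) [CommRing R] [IsLocalRing R]
    (πR : R →+* F) (hπR : Function.Surjective πR)
    (hkerR : RingHom.ker πR = maximalIdeal R)
    (A : Type*) [CommRing A]
    (ρ : SpecialLinearGroup (Fin n) R →* GL (Fin n) A) :
    ∀ M : SpecialLinearGroup (Fin n) R,
      ((ρ M : Matrix (Fin n) (Fin n) A)).det = 1 := by
  intro M
  have hperfect : commutator (SpecialLinearGroup (Fin n) R) = ⊤ := by
    refine SpecialLinearGroup.commutator_eq_top_of_isLocalRing ?_
    by_cases h2 : n = 2
    · have := Fintype.one_lt_card (α := F)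
      exact .inr (exists_units_isUnit_sq_sub_one hπR hkerR (by grind))
    · exact .inl (by omega)
  have hM : M ∈ (GeneralLinearGroup.det.comp ρ).ker :=
    Abelianization.commutator_subset_ker _ (hperfect ▸ Subgroup.mem_top M)
  exact congrArg Units.val hM

/-- For `n ≥ 2` and `(n,|F|) ∉ {(2,2), (2,3)}`, any homomorphism
`ρ : SL_n(R) → GL_n(A)` (with `R`, `A` Artinian local with residue field `F`) lifting the
residual representation `SL_n(R) → SL_n(F) ⊆ GL_n(F)` takes values in `SL_n(A)`. -/
theorem statement_8
    (p : ℕ) [Fact p.Prime] (F : Type*) [Field F] [Fintype F] [CharP F p]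
    (n : ℕ) (hn : 2 ≤ n)
    (h22 : ¬(n = 2 ∧ Fintype.card F = 2)) (h23 : ¬(n = 2 ∧ Fintype.card F = 3))
    (R : Type*) [CommRing R] [IsLocalRing R] [IsArtinianRing R]
    (πR : R →+* F) (hπR : Function.Surjective πR)
    (hkerR : RingHom.ker πR = maximalIdeal R)
    (A : Type*) [CommRing A] [IsLocalRing A] [IsArtinianRing A]
    (πA : A →+* F) (hπA : Function.Surjective πA)
    (hkerA : RingHom.ker πA = maximalIdeal A)
    (ρ : SpecialLinearGroup (Fin n) R →* GL (Fin n) A)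
    (hred : (Matrix.GeneralLinearGroup.map πA).comp ρ =
      SpecialLinearGroup.toGL.comp (SpecialLinearGroup.map πR)) :
    ∀ M : SpecialLinearGroup (Fin n) R,
      ((ρ M : Matrix (Fin n) (Fin n) A)).det = 1 :=
  statement_8_general F n hn h22 h23 R πR hπR hkerR A ρ
end

section
/- Let p be a prime, H a finite group, and N a normal subgroup of H that is a p-group; write Q = H/N and assume the abelianization Q/[Q,Q] has order coprime to p. Then there exists a unique subgroup K of H containing the commutator subgroup [H, H] such that the homomorphism K/[H, H] → Q/[Q, Q] induced by the quotient map H → Q is an isomorphism. -/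
/-!
Pass to abelianizations: `φ : H^ab → Q^ab` is surjective and its kernel, the image of `N`, is
a `p`-group, while `Q^ab` has order `m` coprime to `p`. Subgroups `K ⊇ [H,H]` correspond to
subgroups of `H^ab`, and the condition on `K` says that its image is a complement of `ker φ`.
In the abelian group `H^ab` the only such complement is the `m`-torsion subgroup: a complement
is killed by `m` because `m`-th powers land in `ker φ`, and conversely an `m`-torsion element
differs from an element of the complement with the same image by an element of `ker φ` killed
by `m`, hence trivial.
-/

open Function

theorem IsPGroup.orderOf_coprime_of_mem {G : Type*} [Group G] {p n : ℕ} {L : Subgroup G}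
    (hL : IsPGroup p L) (hn : p.Coprime n) {x : G} (hx : x ∈ L) : (orderOf x).Coprime n := by
  simpa using hL.orderOf_coprime hn ⟨x, hx⟩

theorem IsPGroup.eq_one_of_pow_eq_one {G : Type*} [Group G] {p n : ℕ} {L : Subgroup G}
    (hL : IsPGroup p L) (hn : p.Coprime n) {x : G} (hx : x ∈ L) (hxn : x ^ n = 1) : x = 1 :=
  orderOf_eq_one_iff.mp <|
    (hL.orderOf_coprime_of_mem hn hx).eq_one_of_dvd (orderOf_dvd_of_pow_eq_one hxn)

namespace MonoidHom

variable {G A : Type*} [CommGroup G] [Group A] {p : ℕ} {φ : G →* A}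

theorem map_ker_powMonoidHom_natCard_eq_top (hφ : Surjective φ) (hL : IsPGroup p φ.ker)
    (hm : p.Coprime (Nat.card A)) : (powMonoidHom (Nat.card A) : G →* G).ker.map φ = ⊤ := by
  refine eq_top_iff.mpr fun a _ => ?_
  obtain ⟨g, rfl⟩ := hφ a
  have hgm : g ^ Nat.card A ∈ φ.ker := by simp [mem_ker, pow_card_eq_one']
  set d := orderOf (g ^ Nat.card A)
  have hd : d.Coprime (orderOf (φ g)) :=
    (hL.orderOf_coprime_of_mem hm hgm).coprime_dvd_right (orderOf_dvd_natCard (φ g))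
  -- `g ^ d` is killed by `m`; as `d` is prime to the order of `φ g`, a power of it maps to `φ g`
  obtain ⟨e, he⟩ := exists_pow_eq_self_of_coprime hd
  refine ⟨(g ^ d) ^ e, ?_, by simpa using he⟩
  change ((g ^ d) ^ e) ^ Nat.card A = 1
  rw [← pow_mul, ← pow_mul, show d * (e * Nat.card A) = Nat.card A * d * e by ring, pow_mul,
    pow_mul, pow_orderOf_eq_one, one_pow]

theorem eq_ker_powMonoidHom_natCard (hL : IsPGroup p φ.ker) (hm : p.Coprime (Nat.card A))
    {C : Subgroup G} (hC : C.map φ = ⊤) (hCφ : Disjoint C φ.ker) :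
    C = (powMonoidHom (Nat.card A) : G →* G).ker := by
  have hle : C ≤ (powMonoidHom (Nat.card A) : G →* G).ker := fun c hc =>
    Subgroup.disjoint_def.mp hCφ (pow_mem hc _) (by simp [mem_ker, pow_card_eq_one'])
  refine le_antisymm hle fun s (hs : s ^ Nat.card A = 1) => ?_
  obtain ⟨c, hc, hcs⟩ := hC.ge (Subgroup.mem_top (φ s))
  have hcm : c ^ Nat.card A = 1 := hle hc
  have : s * c⁻¹ = 1 := hL.eq_one_of_pow_eq_one hm (by simp [mem_ker, hcs])
    (by rw [mul_pow, inv_pow, hs, hcm, inv_one, mul_one])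
  rwa [mul_inv_eq_one.mp this]

theorem map_eq_top_and_disjoint_ker_iff_eq_ker_powMonoidHom (hφ : Surjective φ)
    (hL : IsPGroup p φ.ker) (hm : p.Coprime (Nat.card A)) (C : Subgroup G) :
    C.map φ = ⊤ ∧ Disjoint C φ.ker ↔ C = (powMonoidHom (Nat.card A) : G →* G).ker := by
  refine ⟨fun h => eq_ker_powMonoidHom_natCard hL hm h.1 h.2, ?_⟩
  rintro rfl
  exact ⟨map_ker_powMonoidHom_natCard_eq_top hφ hL hm,
    Subgroup.disjoint_def.mpr fun hs hx => hL.eq_one_of_pow_eq_one hm hx hs⟩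

end MonoidHom

namespace Abelianization

variable {G H : Type*} [Group G] [Group H] {f : G →* H}

theorem of_eq_one_iff {x : G} : of x = 1 ↔ x ∈ commutator G := by
  rw [← MonoidHom.mem_ker, ker_of]

theorem map_surjective (hf : Surjective f) : Surjective (map f) :=
  Surjective.of_comp (g := of) <| (QuotientGroup.mk_surjective (s := commutator H)).comp hf

theorem ker_map_of_surjective (hf : Surjective f) : (map f).ker = f.ker.map of := by
  refine le_antisymm (fun g hg => ?_) (Subgroup.map_le_iff_le_comap.mpr fun x hx => ?_)
  · obtain ⟨x, rfl⟩ := QuotientGroup.mk_surjective (s := commutator G) g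
    have hfx : f x ∈ (commutator G).map f := by
      rw [map_commutator_eq, MonoidHom.range_eq_top.mpr hf, ← commutator_def, ← of_eq_one_iff]
      exact hg
    obtain ⟨c, hc, hcx⟩ := hfx
    refine ⟨x * c⁻¹, by simp [hcx], ?_⟩
    rw [map_mul, map_inv, of_eq_one_iff.mpr hc, inv_one, mul_one]
    rfl
  · simp_all [MonoidHom.mem_ker]

theorem disjoint_map_of_ker_iff {A : Type*} [Group A] {φ : Abelianization G →* A}
    {K : Subgroup G} :
    Disjoint (K.map of) φ.ker ↔ ∀ x ∈ K, φ (of x) = 1 → x ∈ commutator G := by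
  simp [Subgroup.disjoint_def, of_eq_one_iff]

end Abelianization

theorem Subgroup.ker_le_and_map_eq_iff_eq_comap {G H : Type*} [Group G] [Group H] {ρ : G →* H}
    (hρ : Surjective ρ) (K : Subgroup G) (C : Subgroup H) :
    ρ.ker ≤ K ∧ K.map ρ = C ↔ K = C.comap ρ :=
  ⟨fun ⟨hK, hKC⟩ => hKC ▸ (comap_map_eq_self hK).symm,
    by rintro rfl; exact ⟨ker_le_comap _ _, map_comap_eq_self_of_surjective hρ _⟩⟩

theorem statement_9_general
    (p : ℕ) (H : Type*) [Group H]
    (N : Subgroup H) [N.Normal] (hN : IsPGroup p N)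
    (hQ : (Nat.card (Abelianization (H ⧸ N))).Coprime p) :
    ∃! K : Subgroup H,
      commutator H ≤ K ∧
      Subgroup.map ((Abelianization.of).comp (QuotientGroup.mk' N)) K = ⊤ ∧
      ∀ x ∈ K, Abelianization.of (QuotientGroup.mk' N x) = 1 → x ∈ commutator H := by
  set φ := Abelianization.map (QuotientGroup.mk' N)
  have hφ : Surjective φ := Abelianization.map_surjective (QuotientGroup.mk'_surjective N)
  have hL : IsPGroup p φ.ker := by
    rw [Abelianization.ker_map_of_surjective (QuotientGroup.mk'_surjective N),
      QuotientGroup.ker_mk']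
    exact hN.map _
  set S := (powMonoidHom (Nat.card (Abelianization (H ⧸ N))) :
    Abelianization H →* Abelianization H).ker
  have hK : ∀ K : Subgroup H,
      (commutator H ≤ K ∧ K.map (φ.comp Abelianization.of) = ⊤ ∧
        ∀ x ∈ K, φ (Abelianization.of x) = 1 → x ∈ commutator H) ↔
      K = S.comap Abelianization.of := fun K => by
    rw [← Subgroup.ker_le_and_map_eq_iff_eq_comap QuotientGroup.mk_surjective,
      ← φ.map_eq_top_and_disjoint_ker_iff_eq_ker_powMonoidHom hφ hL hQ.symm,
      Abelianization.disjoint_map_of_ker_iff, Abelianization.ker_of, Subgroup.map_map]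
  exact (existsUnique_congr hK).mpr existsUnique_eq

/-- Let `H` be a finite group, `N ⊴ H` a normal `p`-subgroup with
`Q = H/N` such that `|Q/[Q,Q]|` is coprime to `p`.  Then there is a unique subgroup `K` of `H`
containing `[H,H]` for which the induced map `K/[H,H] → Q/[Q,Q]` is an isomorphism;
here the induced map is realized through `f : H → Q → Q/[Q,Q]`, and the isomorphism property
is expressed as: `f` restricted to `K` is surjective, and its kernel within `K` is `[H,H]`. -/
theorem statement_9
    (p : ℕ) (hp : p.Prime) (H : Type*) [Group H] [Finite H]
    (N : Subgroup H) [N.Normal] (hN : IsPGroup p N)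
    (hQ : (Nat.card (Abelianization (H ⧸ N))).Coprime p) :
    ∃! K : Subgroup H,
      commutator H ≤ K ∧
      Subgroup.map ((Abelianization.of).comp (QuotientGroup.mk' N)) K = ⊤ ∧
      ∀ x ∈ K, Abelianization.of (QuotientGroup.mk' N x) = 1 → x ∈ commutator H :=
  statement_9_general p H N hN hQ
end

section
/- Let Γ be a finite group, L/K a field extension, and V a finite-dimensional K-vector space with a K-linear action of Γ; write End_{K[Γ]}(V) for the K-algebra of K-linear Γ-equivariant endomorphisms of V. Suppose V is completely reducible as a K[Γ]-module, and suppose E ⊆ End_{K[Γ]}(V) is a K-subalgebra containing K·id which is a field of finite dimension over K. If dim_L End_{L[Γ]}(L ⊗_K V) = dim_K E, then End_{K[Γ]}(V) = E and V is an irreducible K[Γ]-module. -/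
/-!
Since `L ⊗_K End_K(V) ≅ End_L(L ⊗ V)`, base change keeps `K`-independent endomorphisms
`L`-independent, and it maps the commutant of `Γ` on `V` into that on `L ⊗ V`. Hence
`dim_K End_{K[Γ]}(V) ≤ dim_L End_{L[Γ]}(L ⊗ V) = dim_K E`, and `E ⊆ End_{K[Γ]}(V)` must be all of it.
An invariant subspace `q` with invariant complement `r` gives the equivariant projection onto `q`
along `r`, an idempotent of `End_{K[Γ]}(V) = E`; as `E` is a field it is `0` or `1`, so `q` is `0`
or `V`.
-/

open scoped TensorProduct

open Module

theorem LinearIndependent.baseChange_linearMap {R S M N ι : Type*} [CommRing R] [CommRing S]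
    [Algebra R S] [Module.Flat R S] [AddCommGroup M] [Module R M] [Module.FinitePresentation R M]
    [AddCommGroup N] [Module R N] {f : ι → M →ₗ[R] N} (hf : LinearIndependent R f) :
    LinearIndependent S fun i ↦ (f i).baseChange S := by
  -- `(f i).baseChange S` is the image of `1 ⊗ f i` under `S ⊗[R] Hom(M, N) ≃ Hom(S ⊗ M, S ⊗ N)`
  have bc := Module.FinitePresentation.isBaseChange_map R M N S
  have h1 : LinearIndependent S fun i ↦ (1 : S) ⊗ₜ[R] f i :=
    Module.Flat.linearIndependent_one_tmul hf
  convert h1.map' (M' := S ⊗[R] M →ₗ[S] S ⊗[R] N) bc.equiv.toLinearMap bc.equiv.ker using 1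
  · ext i : 1
    simp [bc.equiv_tmul]
  -- the `AddCommMonoid` structure on `Hom` versus the one coming from `AddCommGroup`
  all_goals rfl

theorem Submodule.finrank_le_of_baseChange_mem {K L V W : Type*} [Field K] [Field L]
    [Algebra K L] [AddCommGroup V] [Module K V] [FiniteDimensional K V]
    [AddCommGroup W] [Module K W] (p : Submodule K (V →ₗ[K] W)) [Module.Finite K p]
    (p' : Submodule L (L ⊗[K] V →ₗ[L] L ⊗[K] W)) [Module.Finite L p']
    (h : ∀ f ∈ p, f.baseChange L ∈ p') :
    finrank K p ≤ finrank L p' := by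
  have := Module.finitePresentation_of_finite K V
  let b := Module.finBasis K p
  have hb : LinearIndependent K fun i ↦ (b i : V →ₗ[K] W) :=
    b.linearIndependent.map' p.subtype p.ker_subtype
  have hb' : LinearIndependent L fun i ↦ (⟨_, h _ (b i).2⟩ : p') :=
    LinearIndependent.of_comp p'.subtype hb.baseChange_linearMap
  simpa using hb'.fintype_card_le_finrank

theorem LinearMap.baseChange_mem_centralizer {K L V ι : Type*} [CommRing K] [CommRing L]
    [Algebra K L] [AddCommGroup V] [Module K V] {φ : ι → Module.End K V} {f : Module.End K V}
    (hf : f ∈ Set.centralizer (Set.range φ)) :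
    f.baseChange L ∈ Set.centralizer (Set.range fun i ↦ (φ i).baseChange L) := by
  rintro _ ⟨i, rfl⟩
  rw [← LinearMap.baseChange_mul, ← LinearMap.baseChange_mul, hf (φ i) ⟨i, rfl⟩]

theorem finrank_centralizer_le_finrank_centralizer_baseChange {K L V ι : Type*} [Field K]
    [Field L] [Algebra K L] [AddCommGroup V] [Module K V] [FiniteDimensional K V]
    (φ : ι → Module.End K V) :
    finrank K (Subalgebra.centralizer K (Set.range φ)) ≤
      finrank L (Subalgebra.centralizer L (Set.range fun i ↦ (φ i).baseChange L)) := by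
  simpa only [Subalgebra.finrank_toSubmodule] using
    Submodule.finrank_le_of_baseChange_mem (Subalgebra.centralizer K (Set.range φ)).toSubmodule
      (Subalgebra.centralizer L (Set.range fun i ↦ (φ i).baseChange L)).toSubmodule
      fun _ ↦ LinearMap.baseChange_mem_centralizer

theorem Submodule.projection_mem_centralizer {K V ι : Type*} [Ring K] [AddCommGroup V]
    [Module K V] {φ : ι → Module.End K V} {q r : Submodule K V}
    (hq : ∀ i, ∀ v ∈ q, φ i v ∈ q) (hr : ∀ i, ∀ v ∈ r, φ i v ∈ r) (h : IsCompl q r) :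
    q.projection r h ∈ Set.centralizer (Set.range φ) := by
  rintro _ ⟨i, rfl⟩
  refine (LinearMap.IsIdempotentElem.commute_iff (isIdempotentElem_projection h) |>.mpr
    ⟨?_, ?_⟩).symm.eq
  · rw [range_projection, Module.End.mem_invtSubmodule_iff_forall_mem_of_mem]
    exact hq i
  · rw [ker_projection, Module.End.mem_invtSubmodule_iff_forall_mem_of_mem]
    exact hr i

theorem Submodule.eq_bot_or_eq_top_of_isIdempotentElem_centralizer {K V ι : Type*} [Ring K]
    [AddCommGroup V] [Module K V] {φ : ι → Module.End K V}
    (hcr : ∀ q : Submodule K V, (∀ i, ∀ v ∈ q, φ i v ∈ q) →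
      ∃ r : Submodule K V, (∀ i, ∀ v ∈ r, φ i v ∈ r) ∧ IsCompl q r)
    (hidem : ∀ f ∈ Set.centralizer (Set.range φ), IsIdempotentElem f → f = 0 ∨ f = 1)
    {q : Submodule K V} (hq : ∀ i, ∀ v ∈ q, φ i v ∈ q) :
    q = ⊥ ∨ q = ⊤ := by
  obtain ⟨r, hr, h⟩ := hcr q hq
  rcases hidem _ (projection_mem_centralizer hq hr h) (isIdempotentElem_projection h) with
    h0 | h1
  · left
    rw [← range_projection h, h0, LinearMap.range_zero]
  · right
    refine eq_top_of_isCompl_bot ?_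
    rwa [← ker_projection h, h1, Module.End.one_eq_id, LinearMap.ker_id] at h

theorem statement_14_general
    (K L : Type*) [Field K] [Field L] [Algebra K L]
    (Γ : Type*) [Group Γ]
    (V : Type*) [AddCommGroup V] [Module K V] [FiniteDimensional K V]
    (ρ : Representation K Γ V)
    (hcr : ∀ q : Submodule K V, (∀ g : Γ, ∀ v ∈ q, ρ g v ∈ q) →
      ∃ r : Submodule K V, (∀ g : Γ, ∀ v ∈ r, ρ g v ∈ r) ∧ IsCompl q r)
    (E : Subalgebra K (Module.End K V))
    (hE : E ≤ Subalgebra.centralizer K ((Set.range ⇑ρ) : Set (Module.End K V)))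
    (hEfield : IsField E)
    (hdim : Module.finrank L
        (Subalgebra.centralizer L
          ((Set.range fun g : Γ => LinearMap.baseChange L (ρ g)) :
            Set (Module.End L (L ⊗[K] V)))) =
      Module.finrank K E) :
    E = Subalgebra.centralizer K ((Set.range ⇑ρ) : Set (Module.End K V)) ∧
    ∀ q : Submodule K V, (∀ g : Γ, ∀ v ∈ q, ρ g v ∈ q) → q = ⊥ ∨ q = ⊤ := by
  have hED : E = Subalgebra.centralizer K (Set.range ρ) :=
    Subalgebra.eq_of_le_of_finrank_le hE
      (hdim ▸ finrank_centralizer_le_finrank_centralizer_baseChange ρ)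
  refine ⟨hED, fun q hq ↦ Submodule.eq_bot_or_eq_top_of_isIdempotentElem_centralizer hcr
    (fun f hf hidem ↦ ?_) hq⟩
  let : Field E := hEfield.toField
  have hfE : f ∈ E := hED ▸ hf
  have hidemE : IsIdempotentElem (⟨f, hfE⟩ : E) := Subtype.ext hidem
  simpa [Subtype.ext_iff] using IsIdempotentElem.iff_eq_zero_or_one.mp hidemE

/-- Suppose `V` is a completely reducible `K[Γ]`-module and
`E ⊆ End_{K[Γ]}(V)` is a `K`-subalgebra (automatically containing `K·id`) which is a field of
finite dimension over `K`.  If `dim_L End_{L[Γ]}(L ⊗_K V) = dim_K E`, then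
`End_{K[Γ]}(V) = E` and `V` is an irreducible `K[Γ]`-module.  Here `End_{K[Γ]}(V)` is realized
as the centralizer of the image of the representation inside `End_K(V)`. -/
theorem statement_14
    (K L : Type*) [Field K] [Field L] [Algebra K L]
    (Γ : Type*) [Group Γ] [Finite Γ]
    (V : Type*) [AddCommGroup V] [Module K V] [FiniteDimensional K V]
    (ρ : Representation K Γ V)
    (hcr : ∀ q : Submodule K V, (∀ g : Γ, ∀ v ∈ q, ρ g v ∈ q) →
      ∃ r : Submodule K V, (∀ g : Γ, ∀ v ∈ r, ρ g v ∈ r) ∧ IsCompl q r)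
    (E : Subalgebra K (Module.End K V))
    (hE : E ≤ Subalgebra.centralizer K ((Set.range ⇑ρ) : Set (Module.End K V)))
    (hEfield : IsField E) (hEfin : Module.Finite K E)
    (hdim : Module.finrank L
        (Subalgebra.centralizer L
          ((Set.range fun g : Γ => LinearMap.baseChange L (ρ g)) :
            Set (Module.End L (L ⊗[K] V)))) =
      Module.finrank K E) :
    E = Subalgebra.centralizer K ((Set.range ⇑ρ) : Set (Module.End K V)) ∧
    ∀ q : Submodule K V, (∀ g : Γ, ∀ v ∈ q, ρ g v ∈ q) → q = ⊥ ∨ q = ⊤ :=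
  statement_14_general K L Γ V ρ hcr E hE hEfield hdim
end

section
/- Let n ≥ 2 with p not dividing n, and assume (n, |F|) ∉ {(2,2), (2,3)}. Consider sl_n(F) with the conjugation action of SL_n(F). Then: (i) the only additive subgroups of sl_n(F) stable under X ↦ gXg⁻¹ for all g ∈ SL_n(F) are 0 and sl_n(F) (i.e. sl_n(F) is irreducible as an F_p[SL_n(F)]-module); and (ii) every additive map φ : sl_n(F) → sl_n(F) satisfying φ(gXg⁻¹) = gφ(X)g⁻¹ for all g ∈ SL_n(F) and X ∈ sl_n(F) is multiplication by a scalar: there is c ∈ F with φ(X) = cX for all X. -/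
/-!
Conjugating `X` by a transvection `1 + c • E_ij` changes it by
`conjDiff (c • E_ij) X = E X - X E - E X E`, so an `SL_n`-stable additive subgroup `N` is closed
under these differences. Applying two of them with `E F = F E = 0` leaves only
`F X E + E X F`; starting from any nonzero traceless `X ∈ N`, this (or a single difference when
`X` is diagonal) isolates a whole line `F • E_uv` inside `N`. Further transvections move the line
to every off-diagonal position and produce all `E_vv - E_uu`, which span `sl_n`. Here `char F ∤ n`
enters twice: a nonzero traceless matrix is not scalar, and for `n = 2` the number `2` is
invertible.

For (ii), `E_{i₀ i₁}` is, up to scalars, the only traceless matrix fixed by the transvections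
`1 + E_{i₀ j}` and `1 + E_{i i₁}`; an equivariant `φ` preserves fixed points, so `φ E = c E`,
and the `c`-eigenspace of `φ` is a nonzero stable subgroup, hence everything by (i).
-/

open Matrix

section conjDiff

variable {A : Type*} [Ring A]

def conjDiff (E X : A) : A := E * X - X * E - E * X * E

theorem one_add_mul_mul_one_sub (E X : A) : (1 + E) * X * (1 - E) = X + conjDiff E X := by
  simp only [conjDiff]; noncomm_ring

theorem conjDiff_eq_zero_of_mul_eq_zero {E X : A} (hEX : E * X = 0) (hXE : X * E = 0) :
    conjDiff E X = 0 := by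
  simp [conjDiff, hEX, hXE]

theorem conjDiff_conjDiff {E F : A} (hEF : E * F = 0) (hFE : F * E = 0) (X : A) :
    conjDiff F (conjDiff E X) = -(F * X * E + E * X * F) := by
  have hFE' (Y : A) : F * (E * Y) = 0 := by rw [← mul_assoc, hFE, zero_mul]
  simp only [conjDiff, mul_sub, sub_mul, mul_assoc, hFE', hEF, mul_zero]
  abel

end conjDiff

namespace Matrix

variable {ι : Type*} [Fintype ι]

theorem IsDiag.eq_zero_of_forall_diag_eq {F : Type*} [Field F] {X : Matrix ι ι F}
    (hcard : (Fintype.card ι : F) ≠ 0) (hd : X.IsDiag)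
    (hdiag : ∀ i j, X i i = X j j) (htr : trace X = 0) : X = 0 := by
  have hdiag_zero (a : ι) : X a a = 0 := by
    have : trace X = Fintype.card ι * X a a := by
      simp [trace, hdiag _ a, Finset.sum_const, nsmul_eq_mul]
    exact (mul_eq_zero.1 (this ▸ htr)).resolve_left hcard
  ext a b
  rcases eq_or_ne a b with rfl | hab
  · exact hdiag_zero a
  · exact hd hab

variable [DecidableEq ι] {R : Type*} [CommRing R]

theorem SpecialLinearGroup.transvection_mul_mul_inv {i j : ι} (hij : i ≠ j) (c : R)
    (X : Matrix ι ι R) :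
    (SpecialLinearGroup.transvection hij c : Matrix ι ι R) * X *
        ((SpecialLinearGroup.transvection hij c)⁻¹ : SpecialLinearGroup ι R) =
      X + conjDiff (single i j c) X := by
  rw [SpecialLinearGroup.transvection_inv, SpecialLinearGroup.transvection_coe,
    SpecialLinearGroup.transvection_coe, ← single_neg, ← sub_eq_add_neg,
    one_add_mul_mul_one_sub]

def IsSLStable (N : AddSubgroup (Matrix ι ι R)) : Prop :=
  ∀ g : SpecialLinearGroup ι R, ∀ X ∈ N,
    (g : Matrix ι ι R) * X * ((g⁻¹ : SpecialLinearGroup ι R) : Matrix ι ι R) ∈ N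

namespace IsSLStable

variable {N : AddSubgroup (Matrix ι ι R)} (hN : IsSLStable N) {X : Matrix ι ι R}
include hN

theorem conjDiff_single_mem {i j : ι} (hij : i ≠ j) (c : R) (hX : X ∈ N) :
    conjDiff (single i j c) X ∈ N := by
  have h := N.sub_mem (hN (SpecialLinearGroup.transvection hij c) X hX) hX
  rwa [SpecialLinearGroup.transvection_mul_mul_inv hij, add_sub_cancel_left] at h

theorem single_add_single_mem {i j k l : ι} (hij : i ≠ j) (hkl : k ≠ l) (hjk : j ≠ k)
    (hli : l ≠ i) (s t : R) (hX : X ∈ N) :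
    single k j (t * X l i * s) + single i l (s * X j k * t) ∈ N := by
  have h := N.neg_mem <| hN.conjDiff_single_mem hkl t (hN.conjDiff_single_mem hij s hX)
  rwa [conjDiff_conjDiff (single_mul_single_of_ne _ _ _ _ hjk _)
    (single_mul_single_of_ne _ _ _ _ hli _), neg_neg, single_mul_mul_single,
    single_mul_mul_single] at h

theorem single_mem_of_ne_of_ne {i j k : ι} (hij : i ≠ j) (hik : i ≠ k) (hjk : j ≠ k) (t : R)
    (hX : X ∈ N) : single k j (t * X j i) ∈ N := by
  have hV := hN.single_add_single_mem hij hik hij.symm hik.symm 1 1 hX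
  have h := hN.single_add_single_mem hjk.symm hik.symm hjk hik 1 t hV
  simpa [hij, hjk, hik.symm, single_apply] using h

theorem single_two_mul_mem {i j : ι} (hij : i ≠ j) (t : R) (hX : X ∈ N) :
    single i j (2 * t * X j i) ∈ N := by
  have h := hN.single_add_single_mem hij hij hij.symm hij.symm 1 t hX
  rwa [← single_add, show t * X j i * 1 + 1 * X j i * t = 2 * t * X j i by ring] at h

theorem single_mem_of_isDiag {i j : ι} (hij : i ≠ j) (c : R) (hX : X ∈ N) (hd : X.IsDiag) :
    single i j (c * (X j j - X i i)) ∈ N := by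
  convert hN.conjDiff_single_mem hij c hX using 1
  obtain ⟨d, rfl⟩ : ∃ d, X = diagonal d := ⟨_, hd.diagonal_diag.symm⟩
  ext a b
  simp [conjDiff, single_apply, hij.symm]
  split_ifs <;> simp_all [mul_sub, mul_comm]

variable {u v : ι}

theorem single_mem_row (hline : ∀ c, single u v c ∈ N) {k : ι} (hk : u ≠ k)
    (c : R) : single u k c ∈ N := by
  rcases eq_or_ne k v with rfl | hkv
  · exact hline c
  simpa [conjDiff, hk.symm] using N.neg_mem (hN.conjDiff_single_mem hkv.symm 1 (hline c))

theorem single_mem_col (hline : ∀ c, single u v c ∈ N) {k : ι} (hk : k ≠ v)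
    (c : R) : single k v c ∈ N := by
  rcases eq_or_ne k u with rfl | hku
  · exact hline c
  simpa [conjDiff, hk.symm] using hN.conjDiff_single_mem hku 1 (hline c)

theorem single_sub_single_mem (huv : u ≠ v) (hline : ∀ c, single u v c ∈ N) (c : R) :
    single v v c - single u u c ∈ N := by
  have hD : single v v 1 - single u u 1 - single v u (1 : R) ∈ N := by
    simpa [conjDiff] using hN.conjDiff_single_mem huv.symm 1 (hline 1)
  convert N.sub_mem (hN.conjDiff_single_mem huv c hD) (hline (2 * c + c ^ 2)) using 1
  simp only [conjDiff, mul_sub, sub_mul, single_mul_single_same,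
    single_mul_single_of_ne _ _ _ _ huv.symm, mul_one, one_mul, sub_zero, zero_sub]
  rw [show 2 * c + c ^ 2 = c + c + c * c by ring, single_add, single_add]
  abel

theorem single_mem_swap (huv : u ≠ v) (hline : ∀ c, single u v c ∈ N) (c : R) :
    single v u c ∈ N := by
  have hD := hN.conjDiff_single_mem huv.symm 1 (hline c)
  simpa [conjDiff] using N.sub_mem (hN.single_sub_single_mem huv hline c) hD

theorem single_mem_of_forall_single_mem (huv : u ≠ v) (hline : ∀ c, single u v c ∈ N)
    {a b : ι} (hab : a ≠ b) (c : R) : single a b c ∈ N := by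
  rcases eq_or_ne a v with rfl | hav
  · exact hN.single_mem_row (hN.single_mem_swap huv hline) hab c
  · exact hN.single_mem_row (hN.single_mem_col hline hav) hab c

theorem mem_of_trace_eq_zero (huv : u ≠ v) (hline : ∀ c, single u v c ∈ N)
    {X : Matrix ι ι R} (htr : trace X = 0) : X ∈ N := by
  suffices h : ∀ Y : Matrix ι ι R, Y - single u u (trace Y) ∈ N by simpa [htr] using h X
  intro Y
  induction Y using Matrix.induction_on' with
  | h_zero => simp
  | h_add p q hp hq =>
    simpa [trace_add, single_add, add_sub_add_comm] using N.add_mem hp hq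
  | h_std_basis i j c =>
    rcases eq_or_ne i j with rfl | hij
    · rcases eq_or_ne u i with rfl | hui
      · simp
      · simpa using
          hN.single_sub_single_mem hui (hN.single_mem_of_forall_single_mem huv hline hui) c
    · simpa [trace_single_eq_of_ne _ _ _ hij] using
        hN.single_mem_of_forall_single_mem huv hline hij c

end IsSLStable

section Field

variable {F : Type*} [Field F] {X : Matrix ι ι F}

theorem IsSLStable.exists_forall_single_mem {N : AddSubgroup (Matrix ι ι F)} (hN : IsSLStable N)
    (hcard : (Fintype.card ι : F) ≠ 0) (hX : X ∈ N) (hX0 : X ≠ 0) (htr : trace X = 0) :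
    ∃ u v, u ≠ v ∧ ∀ c, single u v c ∈ N := by
  by_cases hd : X.IsDiag
  · obtain ⟨i, j, hij⟩ : ∃ i j, X i i ≠ X j j := by
      by_contra! h
      exact hX0 (hd.eq_zero_of_forall_diag_eq hcard h htr)
    have hne : i ≠ j := fun h => hij (h ▸ rfl)
    refine ⟨i, j, hne, fun c => ?_⟩
    simpa [sub_ne_zero.2 hij.symm] using hN.single_mem_of_isDiag hne (c / (X j j - X i i)) hX hd
  obtain ⟨j, i, hji, hXji⟩ : ∃ j i, j ≠ i ∧ X j i ≠ 0 := by
    simpa [IsDiag, Pairwise] using hd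
  by_cases hk : ∃ k, i ≠ k ∧ j ≠ k
  · obtain ⟨k, hik, hjk⟩ := hk
    refine ⟨k, j, hjk.symm, fun c => ?_⟩
    simpa [hXji] using hN.single_mem_of_ne_of_ne hji.symm hik hjk (c / X j i) hX
  · push Not at hk
    have huniv : Finset.univ = {i, j} := Eq.symm <| Finset.eq_univ_of_forall fun k => by
      rcases eq_or_ne i k with rfl | hik
      · simp
      · simp [hk k hik]
    have h2 : (2 : F) ≠ 0 := by
      rwa [← Finset.card_univ, huniv, Finset.card_pair hji.symm, Nat.cast_two] at hcard
    refine ⟨i, j, hji.symm, fun c => ?_⟩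
    convert hN.single_two_mul_mem hji.symm (c / (2 * X j i)) hX using 2
    field_simp

theorem IsSLStable.eq_bot_or_forall_mem_iff {N : AddSubgroup (Matrix ι ι F)} (hN : IsSLStable N)
    (hcard : (Fintype.card ι : F) ≠ 0) (htr : ∀ X ∈ N, trace X = 0) :
    N = ⊥ ∨ ∀ X, X ∈ N ↔ trace X = 0 := by
  refine N.bot_or_exists_ne_zero.imp id fun ⟨Y, hY, hY0⟩ => ?_
  obtain ⟨u, v, huv, hline⟩ := hN.exists_forall_single_mem hcard hY hY0 (htr Y hY)
  exact fun X => ⟨htr X, hN.mem_of_trace_eq_zero huv hline⟩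

theorem eq_single_of_forall_conjDiff_eq_zero (hcard : (Fintype.card ι : F) ≠ 0) {i₀ i₁ : ι}
    (h01 : i₀ ≠ i₁) (htr : trace X = 0)
    (hrow : ∀ j, i₀ ≠ j → conjDiff (single i₀ j 1) X = 0)
    (hcol : ∀ i, i ≠ i₁ → conjDiff (single i i₁ 1) X = 0) :
    X = single i₀ i₁ (X i₀ i₁) := by
  have entry (i j a b : ι) (h : conjDiff (single i j (1 : F)) X = 0) :
      (if i = a then X j b else 0) - (if j = b then X a i else 0) -
        (if i = a ∧ j = b then X j i else 0) = 0 := by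
    simpa [conjDiff, single_apply, mul_apply, ite_and] using congrFun (congrFun h a) b
  have hcol₀ (a : ι) (ha : i₀ ≠ a) : X a i₀ = 0 := by
    simpa [ha] using entry i₀ i₁ a i₁ (hrow i₁ h01)
  have hrow_ne (j : ι) (hj : i₀ ≠ j) (b : ι) (hb : j ≠ b) : X j b = 0 := by
    simpa [hb] using entry i₀ j i₀ b (hrow j hj)
  have hrow₀ (b : ι) (hb₀ : b ≠ i₀) (hb₁ : b ≠ i₁) : X i₀ b = 0 := by
    simpa [hb₀] using entry b i₁ i₀ i₁ (hcol b hb₁)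
  have hdiag (j : ι) : X j j = X i₀ i₀ := by
    rcases eq_or_ne i₀ j with rfl | hj
    · rfl
    · simpa [hcol₀ j hj, sub_eq_zero] using entry i₀ j i₀ j (hrow j hj)
  rw [← sub_eq_zero]
  refine IsDiag.eq_zero_of_forall_diag_eq hcard (fun a b hab => ?_) (fun a b => ?_) ?_
  · rcases eq_or_ne i₀ a with rfl | ha
    · rcases eq_or_ne b i₁ with rfl | hb
      · simp
      · simp [hb.symm, hrow₀ b (Ne.symm hab) hb]
    · simp [ha, hrow_ne a ha b hab]
  · have hsd (k : ι) : single i₀ i₁ (X i₀ i₁) k k = 0 :=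
      congrFun (diag_single_of_ne _ _ _ h01) k
    simp [hsd, hdiag a, hdiag b]
  · rw [trace_sub, htr, trace_single_eq_of_ne _ _ _ h01, sub_zero]

end Field

theorem SpecialLinearGroup.trace_mul_mul_inv (g : SpecialLinearGroup ι R) (X : Matrix ι ι R) :
    trace ((g : Matrix ι ι R) * X * ((g⁻¹ : SpecialLinearGroup ι R) : Matrix ι ι R)) =
      trace X := by
  rw [trace_mul_cycle, ← SpecialLinearGroup.coe_mul, inv_mul_cancel, SpecialLinearGroup.coe_one,
    one_mul]

def IsSLEquivariant
    (φ : LinearMap.ker (traceLinearMap ι R R) →+ LinearMap.ker (traceLinearMap ι R R)) :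
    Prop :=
  ∀ (g : SpecialLinearGroup ι R) (X Y : LinearMap.ker (traceLinearMap ι R R)),
    (Y : Matrix ι ι R) =
        g * (X : Matrix ι ι R) * ((g⁻¹ : SpecialLinearGroup ι R) : Matrix ι ι R) →
      (φ Y : Matrix ι ι R) =
        g * (φ X : Matrix ι ι R) * ((g⁻¹ : SpecialLinearGroup ι R) : Matrix ι ι R)

namespace IsSLEquivariant

variable {φ : LinearMap.ker (traceLinearMap ι R R) →+ LinearMap.ker (traceLinearMap ι R R)}
  (hφ : IsSLEquivariant φ)
include hφ

theorem conjDiff_map_eq_zero {i j : ι} (hij : i ≠ j) (c : R)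
    {X : LinearMap.ker (traceLinearMap ι R R)}
    (hX : conjDiff (single i j c) (X : Matrix ι ι R) = 0) :
    conjDiff (single i j c) (φ X : Matrix ι ι R) = 0 := by
  have h := hφ (SpecialLinearGroup.transvection hij c) X X
    (by rw [SpecialLinearGroup.transvection_mul_mul_inv, hX, add_zero])
  rwa [SpecialLinearGroup.transvection_mul_mul_inv, left_eq_add] at h

theorem eq_smul_of_apply_eq_smul
    (hirr : ∀ N : AddSubgroup (Matrix ι ι R), (∀ X ∈ N, trace X = 0) → IsSLStable N →
      N = ⊥ ∨ ∀ X, X ∈ N ↔ trace X = 0)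
    {E : LinearMap.ker (traceLinearMap ι R R)} (hE : E ≠ 0) {c : R} (hφE : φ E = c • E)
    (X : LinearMap.ker (traceLinearMap ι R R)) :
    (φ X : Matrix ι ι R) = c • (X : Matrix ι ι R) := by
  let N : AddSubgroup (Matrix ι ι R) := (φ - c • AddMonoidHom.id _).ker.map
    (LinearMap.ker (traceLinearMap ι R R)).subtype.toAddMonoidHom
  have hmem (Y : LinearMap.ker (traceLinearMap ι R R)) :
      (Y : Matrix ι ι R) ∈ N ↔ φ Y = c • Y := by
    simp [N, AddSubgroup.mem_map, sub_eq_zero]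
  have htr : ∀ Y ∈ N, trace Y = 0 := by
    rintro _ ⟨Y, -, rfl⟩
    exact Y.2
  have hN : IsSLStable N := by
    rintro g _ ⟨Y, hY, rfl⟩
    have hY' : (g : Matrix ι ι R) * Y * ((g⁻¹ : SpecialLinearGroup ι R) : Matrix ι ι R) ∈
        LinearMap.ker (traceLinearMap ι R R) := by
      rw [LinearMap.mem_ker, traceLinearMap_apply, SpecialLinearGroup.trace_mul_mul_inv]
      exact Y.2
    refine (hmem ⟨_, hY'⟩).2 (Subtype.ext ?_)
    rw [hφ g Y ⟨_, hY'⟩ rfl, (hmem Y).1 ⟨Y, hY, rfl⟩]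
    simp only [SetLike.val_smul, mul_smul_comm, smul_mul_assoc]
  rcases hirr N htr hN with hbot | htop
  · have hEN := (hmem E).2 hφE
    rw [hbot, AddSubgroup.mem_bot] at hEN
    exact absurd (Subtype.ext hEN) hE
  · exact congrArg Subtype.val ((hmem X).1 ((htop X).2 X.2))

end IsSLEquivariant

theorem IsSLEquivariant.exists_eq_smul [Nontrivial ι] {F : Type*} [Field F]
    {φ : LinearMap.ker (traceLinearMap ι F F) →+ LinearMap.ker (traceLinearMap ι F F)}
    (hφ : IsSLEquivariant φ) (hcard : (Fintype.card ι : F) ≠ 0) :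
    ∃ c : F, ∀ X, (φ X : Matrix ι ι F) = c • (X : Matrix ι ι F) := by
  obtain ⟨i₀, i₁, h01⟩ := exists_pair_ne ι
  let E : LinearMap.ker (traceLinearMap ι F F) :=
    ⟨single i₀ i₁ 1, trace_single_eq_of_ne _ _ _ h01⟩
  have hE : E ≠ 0 := fun h => by
    simpa [E] using congrFun (congrFun (congrArg Subtype.val h) i₀) i₁
  obtain ⟨c, hφE⟩ : ∃ c, (φ E : Matrix ι ι F) = single i₀ i₁ c := ⟨_,
    eq_single_of_forall_conjDiff_eq_zero hcard h01 (φ E).2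
      (fun j hj => hφ.conjDiff_map_eq_zero hj 1 <| conjDiff_eq_zero_of_mul_eq_zero
        (single_mul_single_of_ne _ _ _ _ hj.symm _) (single_mul_single_of_ne _ _ _ _ h01.symm _))
      (fun i hi => hφ.conjDiff_map_eq_zero hi 1 <| conjDiff_eq_zero_of_mul_eq_zero
        (single_mul_single_of_ne _ _ _ _ h01.symm _) (single_mul_single_of_ne _ _ _ _ hi.symm _))⟩
  refine ⟨c, hφ.eq_smul_of_apply_eq_smul
    (fun N htr hN => hN.eq_bot_or_forall_mem_iff hcard htr) hE (Subtype.ext ?_)⟩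
  rw [hφE, SetLike.val_smul, smul_single, smul_eq_mul, mul_one]

end Matrix

theorem statement_15_general
    (p : ℕ) (F : Type*) [Field F] [CharP F p]
    (n : ℕ) (hn : 2 ≤ n) (hpn : ¬ p ∣ n) :
    -- (i) irreducibility of `sl_n(F)` as an `F_p[SL_n(F)]`-module
    (∀ N : AddSubgroup (Matrix (Fin n) (Fin n) F),
      (∀ X ∈ N, Matrix.trace X = 0) →
      (∀ (g : SpecialLinearGroup (Fin n) F), ∀ X ∈ N,
        (g : Matrix (Fin n) (Fin n) F) * X *
          ((g⁻¹ : SpecialLinearGroup (Fin n) F) : Matrix (Fin n) (Fin n) F) ∈ N) →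
      N = ⊥ ∨ (∀ X : Matrix (Fin n) (Fin n) F, X ∈ N ↔ Matrix.trace X = 0)) ∧
    -- (ii) equivariant additive endomorphisms of `sl_n(F)` are scalars
    (∀ φ : (LinearMap.ker (Matrix.traceLinearMap (Fin n) F F)) →+
        (LinearMap.ker (Matrix.traceLinearMap (Fin n) F F)),
      (∀ (g : SpecialLinearGroup (Fin n) F)
          (X Y : LinearMap.ker (Matrix.traceLinearMap (Fin n) F F)),
        (Y : Matrix (Fin n) (Fin n) F) =
          (g : Matrix (Fin n) (Fin n) F) * (X : Matrix (Fin n) (Fin n) F) *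
            ((g⁻¹ : SpecialLinearGroup (Fin n) F) : Matrix (Fin n) (Fin n) F) →
        (φ Y : Matrix (Fin n) (Fin n) F) =
          (g : Matrix (Fin n) (Fin n) F) * (φ X : Matrix (Fin n) (Fin n) F) *
            ((g⁻¹ : SpecialLinearGroup (Fin n) F) : Matrix (Fin n) (Fin n) F)) →
      ∃ c : F, ∀ X : LinearMap.ker (Matrix.traceLinearMap (Fin n) F F),
        (φ X : Matrix (Fin n) (Fin n) F) = c • (X : Matrix (Fin n) (Fin n) F)) := by
  have hcard : (Fintype.card (Fin n) : F) ≠ 0 := by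
    rwa [Fintype.card_fin, Ne, CharP.cast_eq_zero_iff F p]
  have : Nontrivial (Fin n) := Fin.nontrivial_iff_two_le.2 hn
  exact ⟨fun N htr hN => IsSLStable.eq_bot_or_forall_mem_iff hN hcard htr,
    fun φ hφ => IsSLEquivariant.exists_eq_smul hφ hcard⟩

/-- For `n ≥ 2`, `p ∤ n`, `(n,|F|) ∉ {(2,2), (2,3)}`:
(i) the only `SL_n(F)`-stable additive subgroups of `sl_n(F)` are `0` and `sl_n(F)`; and
(ii) every additive `SL_n(F)`-equivariant endomorphism of `sl_n(F)` is multiplication by a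
scalar of `F`. -/
theorem statement_15
    (p : ℕ) [Fact p.Prime] (F : Type*) [Field F] [Fintype F] [CharP F p]
    (n : ℕ) (hn : 2 ≤ n) (hpn : ¬ p ∣ n)
    (h22 : ¬(n = 2 ∧ Fintype.card F = 2)) (h23 : ¬(n = 2 ∧ Fintype.card F = 3)) :
    -- (i) irreducibility of `sl_n(F)` as an `F_p[SL_n(F)]`-module
    (∀ N : AddSubgroup (Matrix (Fin n) (Fin n) F),
      (∀ X ∈ N, Matrix.trace X = 0) →
      (∀ (g : SpecialLinearGroup (Fin n) F), ∀ X ∈ N,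
        (g : Matrix (Fin n) (Fin n) F) * X *
          ((g⁻¹ : SpecialLinearGroup (Fin n) F) : Matrix (Fin n) (Fin n) F) ∈ N) →
      N = ⊥ ∨ (∀ X : Matrix (Fin n) (Fin n) F, X ∈ N ↔ Matrix.trace X = 0)) ∧
    -- (ii) equivariant additive endomorphisms of `sl_n(F)` are scalars
    (∀ φ : (LinearMap.ker (Matrix.traceLinearMap (Fin n) F F)) →+
        (LinearMap.ker (Matrix.traceLinearMap (Fin n) F F)),
      (∀ (g : SpecialLinearGroup (Fin n) F)
          (X Y : LinearMap.ker (Matrix.traceLinearMap (Fin n) F F)),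
        (Y : Matrix (Fin n) (Fin n) F) =
          (g : Matrix (Fin n) (Fin n) F) * (X : Matrix (Fin n) (Fin n) F) *
            ((g⁻¹ : SpecialLinearGroup (Fin n) F) : Matrix (Fin n) (Fin n) F) →
        (φ Y : Matrix (Fin n) (Fin n) F) =
          (g : Matrix (Fin n) (Fin n) F) * (φ X : Matrix (Fin n) (Fin n) F) *
            ((g⁻¹ : SpecialLinearGroup (Fin n) F) : Matrix (Fin n) (Fin n) F)) →
      ∃ c : F, ∀ X : LinearMap.ker (Matrix.traceLinearMap (Fin n) F F),
        (φ X : Matrix (Fin n) (Fin n) F) = c • (X : Matrix (Fin n) (Fin n) F)) :=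
  statement_15_general p F n hn hpn
end

section
/- Let n ≥ 2 with p not dividing n, and assume (n, |F|) ∉ {(2,2), (2,3)}. Let H be a subgroup of SL_n(F[ε]) whose image under the reduction SL_n(F[ε]) → SL_n(F) (sending ε to 0) is all of SL_n(F). Then either H intersects the kernel of this reduction trivially, or H = SL_n(F[ε]). -/
/-!
If `H` meets the kernel `{1 + εX : tr X = 0}` of the reduction nontrivially, the matrices `X`
with `1 + εX ∈ H` form a nonzero additive subgroup `M` of `𝔰𝔩_n(F)`. Since `H` surjects onto
`SL_n(F)`, `M` is stable under conjugation by `SL_n(F)`: conjugating `1 + εX` by a lift of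
`g` gives `1 + ε gXg⁻¹`. Conjugating by a transvection `1 + cE_ab` and subtracting shows
`[cE_ab, X] - c² X_ba E_ab ∈ M`. Iterating these commutators extracts a nonzero elementary
matrix `cE_ij` from any nonzero `X ∈ M` (using `p ∤ n` when `X` is diagonal, and a third index
or `2 ≠ 0` otherwise), then every `dE_ab` with `a ≠ b` and every `d(E_aa - E_bb)`. Hence `M` is
all of `𝔰𝔩_n(F)`, so `H` contains the kernel, and a subgroup containing the kernel and
surjecting onto `SL_n(F)` is everything.
-/

open Matrix

namespace SLDualNumber

section Invariant

variable {ι R : Type*} [Fintype ι] [DecidableEq ι] [CommRing R]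

def IsSLInvariant (M : AddSubgroup (Matrix ι ι R)) : Prop :=
  ∀ g : SpecialLinearGroup ι R, ∀ X ∈ M,
    (g : Matrix ι ι R) * X * ((g⁻¹ : SpecialLinearGroup ι R) : Matrix ι ι R) ∈ M

lemma coe_inv_eq_of_mul_eq_one (g : SpecialLinearGroup ι R) {B : Matrix ι ι R}
    (h : (g : Matrix ι ι R) * B = 1) : ((g⁻¹ : SpecialLinearGroup ι R) : Matrix ι ι R) = B :=
  left_inv_eq_right_inv (by rw [← Matrix.SpecialLinearGroup.coe_mul, inv_mul_cancel,
    Matrix.SpecialLinearGroup.coe_one]) h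

lemma single_mul_apply_eq_ite (a b : ι) (c : R) (X : Matrix ι ι R) (r s : ι) :
    (single a b c * X) r s = if r = a then c * X b s else 0 := by
  split_ifs with h
  · rw [h, single_mul_apply_same]
  · exact single_mul_apply_of_ne _ _ _ _ _ h _

lemma mul_single_apply_eq_ite (a b : ι) (c : R) (X : Matrix ι ι R) (r s : ι) :
    (X * single a b c) r s = if s = b then X r a * c else 0 := by
  split_ifs with h
  · rw [h, mul_single_apply_same]
  · exact mul_single_apply_of_ne _ _ _ _ _ h _

variable {M : AddSubgroup (Matrix ι ι R)} {a b i j k : ι}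

lemma IsSLInvariant.transvection_mul_mul_mem (hM : IsSLInvariant M) (hab : a ≠ b) (c : R)
    {X : Matrix ι ι R} (hX : X ∈ M) : transvection a b c * X * transvection a b (-c) ∈ M := by
  let t : SpecialLinearGroup ι R := ⟨transvection a b c, det_transvection_of_ne a b hab c⟩
  have ht : ((t⁻¹ : SpecialLinearGroup ι R) : Matrix ι ι R) = transvection a b (-c) :=
    coe_inv_eq_of_mul_eq_one t <| by
      rw [transvection_mul_transvection_same _ _ hab, add_neg_cancel, transvection_zero]
  simpa [ht] using hM t X hX

lemma IsSLInvariant.commutator_single_mem (hM : IsSLInvariant M) (hab : a ≠ b) (c : R)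
    {X : Matrix ι ι R} (hX : X ∈ M) :
    single a b c * X - X * single a b c - single a b (c * X b a * c) ∈ M := by
  have hconj : transvection a b c * X * transvection a b (-c) - X
      = single a b c * X - X * single a b c - single a b (c * X b a * c) := by
    rw [transvection, transvection, ← single_neg, ← single_mul_mul_single]
    noncomm_ring
  simpa [hconj] using M.sub_mem (hM.transvection_mul_mul_mem hab c hX) hX

lemma IsSLInvariant.single_mem_of_row (hM : IsSLInvariant M) (hki : k ≠ i) (hkj : k ≠ j)
    {d : R} (h : single i j d ∈ M) (t : R) : single k j (t * d) ∈ M := by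
  simpa [hkj.symm, single_apply_of_col_ne] using hM.commutator_single_mem hki t h

lemma IsSLInvariant.single_mem_of_col (hM : IsSLInvariant M) (hki : k ≠ i) (hkj : k ≠ j)
    {d : R} (h : single i j d ∈ M) (t : R) : single i k (d * t) ∈ M := by
  simpa [hki, single_apply_of_row_ne hki.symm] using hM.commutator_single_mem hkj.symm t h

lemma IsSLInvariant.single_mem_transpose (hM : IsSLInvariant M) (hij : i ≠ j) {c : R}
    (h : single i j c ∈ M) (t : R) : single j i (2 * t ^ 2 * c) ∈ M := by
  have hsum := M.neg_mem <| M.add_mem (hM.commutator_single_mem hij.symm t h)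
    (hM.commutator_single_mem hij.symm (-t) h)
  convert hsum using 1
  ext r s
  simp only [single_mul_single_same, single_apply_same, Matrix.sub_apply, Matrix.add_apply,
    Matrix.neg_apply, single_apply]
  split_ifs <;> ring

lemma IsSLInvariant.single_sub_single_mem (hM : IsSLInvariant M) (hij : i ≠ j) {c : R}
    (hIJ : single i j c ∈ M) (hJI : single j i c ∈ M) : single j j c - single i i c ∈ M := by
  simpa using M.add_mem (hM.commutator_single_mem hij.symm 1 hIJ) hJI

lemma IsSLInvariant.single_mem_of_diagonal_mem (hM : IsSLInvariant M) {d : ι → R}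
    (hd : diagonal d ∈ M) (hij : i ≠ j) : single i j (d j - d i) ∈ M := by
  convert hM.commutator_single_mem hij 1 hd using 1
  ext r s
  simp only [Matrix.sub_apply, single_mul_apply_eq_ite, mul_single_apply_eq_ite, single_apply,
    diagonal_apply]
  split_ifs <;> subst_vars <;> simp_all

lemma IsSLInvariant.single_two_mul_mem (hM : IsSLInvariant M) {X : Matrix ι ι R}
    (hX : X ∈ M) (hij : i ≠ j) : single i j (2 * X j i) ∈ M := by
  convert M.neg_mem (hM.commutator_single_mem hij 1 (hM.commutator_single_mem hij 1 hX)) using 1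
  ext r s
  simp only [Matrix.neg_apply, Matrix.sub_apply, single_mul_apply_eq_ite, mul_single_apply_eq_ite,
    single_apply, hij, hij.symm, false_and, and_false, if_false]
  split_ifs <;> subst_vars <;> simp_all
  ring

lemma IsSLInvariant.single_mem_of_ne_ne (hM : IsSLInvariant M) {X : Matrix ι ι R}
    (hX : X ∈ M) (hij : i ≠ j) (hki : k ≠ i) (hkj : k ≠ j) : single i j (X j i) ∈ M := by
  -- the three commutators are `E_ij X - X E_ij - X_ji E_ij`, `-X_ki E_ij - X_ji E_ik`
  -- and `X_ji E_ij`
  convert hM.commutator_single_mem hkj 1 <| hM.commutator_single_mem hki.symm 1 <|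
    hM.commutator_single_mem hij 1 hX using 1
  ext r s
  simp only [Matrix.sub_apply, single_mul_apply_eq_ite, mul_single_apply_eq_ite, single_apply,
    hij, hij.symm, hki, hki.symm, hkj, hkj.symm, false_and, and_false, if_false]
  split_ifs <;> subst_vars <;> simp_all

lemma IsSLInvariant.exists_single_mem_row (hM : IsSLInvariant M) (hij : i ≠ j)
    (hIJ : ∀ d, single i j d ∈ M) (hJI : ∀ d, single j i d ∈ M) (a : ι) :
    ∃ y, y ≠ a ∧ ∀ d, single a y d ∈ M := by
  by_cases hai : a = i
  · exact ⟨j, hai ▸ hij.symm, hai ▸ hIJ⟩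
  by_cases haj : a = j
  · exact ⟨i, haj ▸ hij, haj ▸ hJI⟩
  exact ⟨j, Ne.symm haj, fun d => by simpa using hM.single_mem_of_row hai haj (hIJ d) 1⟩

lemma IsSLInvariant.single_mem_of_forall (hM : IsSLInvariant M) (hij : i ≠ j)
    (hIJ : ∀ d, single i j d ∈ M) (hJI : ∀ d, single j i d ∈ M) (hab : a ≠ b) (d : R) :
    single a b d ∈ M := by
  obtain ⟨y, hya, hy⟩ := hM.exists_single_mem_row hij hIJ hJI a
  obtain rfl | hby := eq_or_ne b y
  · exact hy d
  simpa using hM.single_mem_of_col hab.symm hby (hy d) 1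

lemma mem_of_trace_eq_zero_of_forall_single_mem (i₀ : ι)
    (hoff : ∀ a b, a ≠ b → ∀ d, single a b d ∈ M)
    (hdiag : ∀ a d, single a a d - single i₀ i₀ d ∈ M)
    {X : Matrix ι ι R} (hX : trace X = 0) : X ∈ M := by
  have hsub : ∀ Y : Matrix ι ι R, Y - single i₀ i₀ (trace Y) ∈ M := by
    intro Y
    induction Y using Matrix.induction_on' with
    | h_zero => simp
    | h_add p q hp hq =>
      simpa [trace_add, single_add, sub_add_sub_comm] using M.add_mem hp hq
    | h_std_basis a b d =>
      obtain rfl | hab := eq_or_ne a b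
      · simpa using hdiag a d
      · simpa [hab] using hoff a b hab d
  simpa [hX] using hsub X

end Invariant

section Field

variable {ι F : Type*} [Fintype ι] [DecidableEq ι] [Field F]
  {M : AddSubgroup (Matrix ι ι F)} {i j k : ι}

lemma exists_ne_ne_of_two_lt_card (h : 2 < Fintype.card ι) (i j : ι) : ∃ k, k ≠ i ∧ k ≠ j := by
  have hlt : ({i, j} : Finset ι).card < (Finset.univ : Finset ι).card :=
    (Finset.card_le_two).trans_lt h
  obtain ⟨k, -, hk⟩ := Finset.exists_mem_notMem_of_card_lt_card hlt
  exact ⟨k, by simpa [not_or] using hk⟩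

lemma IsSLInvariant.forall_single_mem_of_row (hM : IsSLInvariant M) (hki : k ≠ i)
    (hkj : k ≠ j) {c : F} (hc : c ≠ 0) (h : single i j c ∈ M) (d : F) : single k j d ∈ M := by
  simpa [hc] using hM.single_mem_of_row hki hkj h (d / c)

lemma IsSLInvariant.forall_single_mem_of_col (hM : IsSLInvariant M) (hki : k ≠ i)
    (hkj : k ≠ j) {c : F} (hc : c ≠ 0) (h : single i j c ∈ M) (d : F) : single i k d ∈ M := by
  simpa [hc] using hM.single_mem_of_col hki hkj h (c⁻¹ * d)

lemma IsSLInvariant.forall_single_mem_transpose (hM : IsSLInvariant M) (h2 : (2 : F) ≠ 0)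
    (hij : i ≠ j) {c : F} (hc : c ≠ 0) (h : single i j c ∈ M) (d : F) : single j i d ∈ M := by
  -- `d = 2c · e` and `e = ((e + 1) / 2) ^ 2 - ((e - 1) / 2) ^ 2`
  set e := d / (2 * c) with he
  have hd : single j i d
      = single j i (2 * ((e + 1) / 2) ^ 2 * c) - single j i (2 * ((e - 1) / 2) ^ 2 * c) := by
    rw [sub_eq_add_neg, single_neg, ← single_add]
    congr 1
    rw [he]
    field_simp
    ring
  rw [hd]
  exact M.sub_mem (hM.single_mem_transpose hij h _) (hM.single_mem_transpose hij h _)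

lemma IsSLInvariant.forall_single_mem (hM : IsSLInvariant M)
    (hι : 2 < Fintype.card ι ∨ (2 : F) ≠ 0) (hij : i ≠ j) {c : F} (hc : c ≠ 0)
    (h : single i j c ∈ M) : (∀ d, single i j d ∈ M) ∧ ∀ d, single j i d ∈ M := by
  rcases hι with hcard | h2
  · obtain ⟨k, hki, hkj⟩ := exists_ne_ne_of_two_lt_card hcard i j
    have hKJ : ∀ d, single k j d ∈ M := hM.forall_single_mem_of_row hki hkj hc h
    have hKI : ∀ d, single k i d ∈ M :=
      hM.forall_single_mem_of_col hki.symm hij one_ne_zero (hKJ 1)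
    exact ⟨hM.forall_single_mem_of_row hki.symm hij one_ne_zero (hKJ 1),
      hM.forall_single_mem_of_row hkj.symm hij.symm one_ne_zero (hKI 1)⟩
  · have hJI := hM.forall_single_mem_transpose h2 hij hc h
    exact ⟨hM.forall_single_mem_transpose h2 hij.symm one_ne_zero (hJI 1), hJI⟩

lemma _root_.Matrix.IsDiag.exists_apply_ne {X : Matrix ι ι F} (hdiag : X.IsDiag)
    (hX0 : X ≠ 0) (htr : trace X = 0) (hcard : (Fintype.card ι : F) ≠ 0) :
    ∃ i j, i ≠ j ∧ X i i ≠ X j j := by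
  by_contra! hconst
  obtain ⟨i₀, -, -⟩ : ∃ i₀ j₀, X i₀ j₀ ≠ 0 := by
    by_contra! h0
    exact hX0 (Matrix.ext h0)
  have hscalar : X = X i₀ i₀ • 1 := by
    ext a b
    obtain rfl | hab := eq_or_ne a b
    · obtain rfl | ha := eq_or_ne a i₀
      · simp
      · simpa using hconst a i₀ ha
    · simp [hdiag hab, hab]
  rw [hscalar, trace_smul, trace_one, smul_eq_mul, mul_eq_zero] at htr
  exact hX0 (by rw [hscalar, htr.resolve_right hcard, zero_smul])

lemma IsSLInvariant.exists_single_mem (hM : IsSLInvariant M)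
    (hι : 2 < Fintype.card ι ∨ (2 : F) ≠ 0) (hcard : (Fintype.card ι : F) ≠ 0)
    {X : Matrix ι ι F} (hX : X ∈ M) (hX0 : X ≠ 0) (htr : trace X = 0) :
    ∃ i j, i ≠ j ∧ ∃ c ≠ 0, single i j c ∈ M := by
  by_cases hdiag : X.IsDiag
  · obtain ⟨i, j, hij, hne⟩ := hdiag.exists_apply_ne hX0 htr hcard
    rw [← hdiag.diagonal_diag] at hX
    exact ⟨i, j, hij, X j j - X i i, sub_ne_zero.mpr hne.symm,
      by simpa using hM.single_mem_of_diagonal_mem hX hij⟩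
  obtain ⟨j, i, hji, hne⟩ : ∃ j i, j ≠ i ∧ X j i ≠ 0 := by
    simpa [IsDiag, Pairwise] using hdiag
  rcases hι with hcard3 | h2
  · obtain ⟨k, hki, hkj⟩ := exists_ne_ne_of_two_lt_card hcard3 i j
    exact ⟨i, j, hji.symm, X j i, hne, hM.single_mem_of_ne_ne hX hji.symm hki hkj⟩
  · exact ⟨i, j, hji.symm, 2 * X j i, mul_ne_zero h2 hne, hM.single_two_mul_mem hX hji.symm⟩

theorem IsSLInvariant.mem_of_trace_eq_zero (hM : IsSLInvariant M)
    (htr : ∀ X ∈ M, trace X = 0) (hcard : (Fintype.card ι : F) ≠ 0)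
    (hι : 2 < Fintype.card ι ∨ (2 : F) ≠ 0) (hne : M ≠ ⊥) {X : Matrix ι ι F}
    (hX : trace X = 0) : X ∈ M := by
  obtain ⟨⟨X₀, hX₀⟩, hX₀0⟩ := AddSubgroup.ne_bot_iff_exists_ne_zero.mp hne
  obtain ⟨i, j, hij, c, hc, h⟩ :=
    hM.exists_single_mem hι hcard hX₀ (by simpa using hX₀0) (htr X₀ hX₀)
  obtain ⟨hIJ, hJI⟩ := hM.forall_single_mem hι hij hc h
  have hoff : ∀ a b, a ≠ b → ∀ d, single a b d ∈ M := fun a b hab =>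
    hM.single_mem_of_forall hij hIJ hJI hab
  refine mem_of_trace_eq_zero_of_forall_single_mem i hoff (fun a d => ?_) hX
  obtain rfl | hai := eq_or_ne a i
  · simp
  · exact hM.single_sub_single_mem hai.symm (hoff i a hai.symm d) (hoff a i hai d)

end Field

section DualNumber

open TrivSqZeroExt DualNumber

variable {ι R : Type*} [CommRing R]

lemma eps_smul_map_fst_map_inl (A : Matrix ι ι (DualNumber R)) :
    (ε : DualNumber R) • ((A.map fst).map inl : Matrix ι ι (DualNumber R)) =
      (ε : DualNumber R) • A := by
  ext a b <;> simp

lemma map_fst_mul [Fintype ι] (A B : Matrix ι ι (DualNumber R)) :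
    (A * B).map fst = A.map fst * B.map fst :=
  Matrix.map_mul (f := (fstHom R R R).toRingHom)

variable [DecidableEq ι]

def oneAddEps (X : Matrix ι ι R) : Matrix ι ι (DualNumber R) :=
  1 + (ε : DualNumber R) • X.map inl

@[simp]
lemma oneAddEps_zero : oneAddEps (0 : Matrix ι ι R) = 1 := by
  simp [oneAddEps, Matrix.map_zero _ (inl_zero R)]

lemma eq_oneAddEps_of_map_fst_eq_one {A : Matrix ι ι (DualNumber R)} (hA : A.map fst = 1) :
    A = oneAddEps (A.map snd) := by
  ext a b
  all_goals
    have hab := congrFun (congrFun hA a) b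
    by_cases a = b <;> simp_all [oneAddEps, one_apply]

variable [Fintype ι]

lemma det_one_add_smul_of_sq_eq_zero {S : Type*} [CommRing S] {r : S} (hr : r ^ 2 = 0)
    (A : Matrix ι ι S) : det (1 + r • A) = 1 + trace A * r := by
  rw [det_one_add_smul, hr, mul_zero, add_zero]

lemma oneAddEps_add (X Y : Matrix ι ι R) :
    oneAddEps (X + Y) = oneAddEps X * oneAddEps Y := by
  simp only [oneAddEps, add_mul, mul_add, one_mul, mul_one, smul_mul_smul_comm, eps_mul_eps,
    zero_smul, add_zero, Matrix.map_add _ (inl_add R), smul_add, add_assoc]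

lemma det_oneAddEps_eq_one_iff (X : Matrix ι ι R) : det (oneAddEps X) = 1 ↔ trace X = 0 := by
  have htr : trace (X.map inl : Matrix ι ι (DualNumber R)) = inl (trace X) :=
    (AddMonoidHom.map_trace (inlHom R R) X).symm
  rw [oneAddEps, det_one_add_smul_of_sq_eq_zero eps_pow_two, htr, add_eq_left, inl_mul_eq_smul,
    ← inr_eq_smul_eps, inr_injective.eq_iff' (inr_zero R)]

lemma mul_oneAddEps_mul {A B : Matrix ι ι (DualNumber R)} (hAB : A * B = 1) (X : Matrix ι ι R) :
    A * oneAddEps X * B = oneAddEps (A.map fst * X * B.map fst) := by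
  have hfst : (A * X.map inl * B).map fst = A.map fst * X * B.map fst := by
    simp [map_fst_mul, Matrix.map_map]
  rw [oneAddEps, oneAddEps, ← hfst, eps_smul_map_fst_map_inl, mul_add, add_mul, mul_one, hAB,
    mul_smul_comm, smul_mul_assoc]

abbrev reduction : SpecialLinearGroup ι (DualNumber R) →* SpecialLinearGroup ι R :=
  SpecialLinearGroup.map (fstHom R R R).toRingHom

lemma coe_eq_oneAddEps_of_mem_ker {g : SpecialLinearGroup ι (DualNumber R)}
    (hg : g ∈ (reduction (ι := ι) (R := R)).ker) :
    (g : Matrix ι ι (DualNumber R)) = oneAddEps ((g : Matrix ι ι (DualNumber R)).map snd) :=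
  eq_oneAddEps_of_map_fst_eq_one <|
    congrArg (fun x : SpecialLinearGroup ι R => (x : Matrix ι ι R)) (MonoidHom.mem_ker.mp hg)

def infinitesimals (H : Subgroup (SpecialLinearGroup ι (DualNumber R))) :
    AddSubgroup (Matrix ι ι R) where
  carrier := {X | ∃ g ∈ H, (g : Matrix ι ι (DualNumber R)) = oneAddEps X}
  zero_mem' := ⟨1, H.one_mem, by simp⟩
  add_mem' := by
    rintro X Y ⟨g, hg, hgX⟩ ⟨h, hh, hhY⟩
    exact ⟨g * h, H.mul_mem hg hh, by
      rw [Matrix.SpecialLinearGroup.coe_mul, hgX, hhY, oneAddEps_add]⟩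
  neg_mem' := by
    rintro X ⟨g, hg, hgX⟩
    exact ⟨g⁻¹, H.inv_mem hg, coe_inv_eq_of_mul_eq_one g <| by
      rw [hgX, ← oneAddEps_add, add_neg_cancel, oneAddEps_zero]⟩

variable {H : Subgroup (SpecialLinearGroup ι (DualNumber R))}

lemma trace_eq_zero_of_mem_infinitesimals {X : Matrix ι ι R} (hX : X ∈ infinitesimals H) :
    trace X = 0 := by
  obtain ⟨g, -, hg⟩ := hX
  rw [← det_oneAddEps_eq_one_iff, ← hg]
  exact g.prop

lemma isSLInvariant_infinitesimals (hH : H.map reduction = ⊤) :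
    IsSLInvariant (infinitesimals H) := by
  rintro g₀ X ⟨g, hg, hgX⟩
  obtain ⟨l, hl, rfl⟩ := Subgroup.mem_map.mp (hH ▸ Subgroup.mem_top g₀)
  refine ⟨l * g * l⁻¹, H.mul_mem (H.mul_mem hl hg) (H.inv_mem hl), ?_⟩
  rw [Matrix.SpecialLinearGroup.coe_mul, Matrix.SpecialLinearGroup.coe_mul, hgX, ← map_inv,
    mul_oneAddEps_mul (by rw [← Matrix.SpecialLinearGroup.coe_mul, mul_inv_cancel,
      Matrix.SpecialLinearGroup.coe_one])]
  rfl

lemma infinitesimals_ne_bot (hH : H ⊓ reduction.ker ≠ ⊥) : infinitesimals H ≠ ⊥ := by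
  obtain ⟨⟨g, hgH, hgK⟩, hg1⟩ := Subgroup.ne_bot_iff_exists_ne_one.mp hH
  have hgX := coe_eq_oneAddEps_of_mem_ker hgK
  refine AddSubgroup.ne_bot_iff_exists_ne_zero.mpr ⟨⟨_, g, hgH, hgX⟩, fun h0 => hg1 ?_⟩
  have hX0 : (g : Matrix ι ι (DualNumber R)).map snd = 0 := congrArg Subtype.val h0
  ext : 2
  rw [hgX, hX0, oneAddEps_zero, Subgroup.coe_one, Matrix.SpecialLinearGroup.coe_one]

lemma ker_reduction_le (hH : ∀ X : Matrix ι ι R, trace X = 0 → X ∈ infinitesimals H) :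
    reduction.ker ≤ H := by
  intro k hk
  have hkX := coe_eq_oneAddEps_of_mem_ker hk
  obtain ⟨g, hg, hgX⟩ := hH _ <| (det_oneAddEps_eq_one_iff _).mp (hkX ▸ k.prop)
  rwa [show k = g from Subtype.ext (hkX.trans hgX.symm)]

end DualNumber

theorem eq_top_of_inf_ker_reduction_ne_bot {ι F : Type*} [Fintype ι] [DecidableEq ι] [Field F]
    {H : Subgroup (SpecialLinearGroup ι (DualNumber F))} (hH : H.map reduction = ⊤)
    (hcard : (Fintype.card ι : F) ≠ 0) (hι : 2 < Fintype.card ι ∨ (2 : F) ≠ 0)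
    (hne : H ⊓ reduction.ker ≠ ⊥) : H = ⊤ := by
  have hker : reduction.ker ≤ H := ker_reduction_le fun X hX =>
    (isSLInvariant_infinitesimals hH).mem_of_trace_eq_zero
      (fun _ => trace_eq_zero_of_mem_infinitesimals) hcard hι (infinitesimals_ne_bot hne) hX
  rw [eq_top_iff, ← Subgroup.comap_top reduction, ← hH, Subgroup.comap_map_eq,
    sup_eq_left.mpr hker]

end SLDualNumber

theorem statement_19_general
    (p : ℕ) (F : Type*) [Field F] [CharP F p]
    (n : ℕ) (hn : 2 ≤ n) (hpn : ¬ p ∣ n)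
    (H : Subgroup (SpecialLinearGroup (Fin n) (DualNumber F)))
    (Hfull : Subgroup.map
      (SpecialLinearGroup.map (TrivSqZeroExt.fstHom F F F).toRingHom) H = ⊤) :
    H ⊓ (SpecialLinearGroup.map
        (n := Fin n) (TrivSqZeroExt.fstHom F F F).toRingHom).ker = ⊥ ∨
      H = ⊤ := by
  refine or_iff_not_imp_left.mpr fun hne =>
    SLDualNumber.eq_top_of_inf_ker_reduction_ne_bot Hfull ?_ ?_ hne
  · rwa [Fintype.card_fin, Ne, CharP.cast_eq_zero_iff F p]
  · rcases hn.lt_or_eq with h3 | rfl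
    · exact Or.inl (by simpa using h3)
    · exact Or.inr (by exact_mod_cast (CharP.cast_eq_zero_iff F p 2).not.mpr hpn)

/-- For `n ≥ 2`, `p ∤ n`, `(n,|F|) ∉ {(2,2), (2,3)}`, a subgroup of
`SL_n(F[ε])` with full image in `SL_n(F)` either meets the kernel of the reduction
`SL_n(F[ε]) → SL_n(F)` trivially, or is all of `SL_n(F[ε])`. -/
theorem statement_19
    (p : ℕ) [Fact p.Prime] (F : Type*) [Field F] [Fintype F] [CharP F p]
    (n : ℕ) (hn : 2 ≤ n) (hpn : ¬ p ∣ n)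
    (h22 : ¬(n = 2 ∧ Fintype.card F = 2)) (h23 : ¬(n = 2 ∧ Fintype.card F = 3))
    (H : Subgroup (SpecialLinearGroup (Fin n) (DualNumber F)))
    (Hfull : Subgroup.map
      (SpecialLinearGroup.map (TrivSqZeroExt.fstHom F F F).toRingHom) H = ⊤) :
    H ⊓ (SpecialLinearGroup.map
        (n := Fin n) (TrivSqZeroExt.fstHom F F F).toRingHom).ker = ⊥ ∨
      H = ⊤ :=
  statement_19_general p F n hn hpn H Hfull
end
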